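/- arXiv:1405.4094 — 6 statements merged into one kernel-verified Lean document; each statement's English description precedes it below -/
import Mathlib

section
/- Let m ≥ 1 and 1 ≤ k ≤ m. The linear map R : C^∞(ℝ^m, ℝ) → C^∞(ℝ^{m−k}, ℝ) defined by (Rf)(x_{k+1},…,x_m) = f(0,…,0,x_{k+1},…,x_m) is surjective and its kernel equals the submodule D_k = {Σ_{i=1}^{k} x_i · g_i(x) : g₁,…,g_k ∈ C^∞(ℝ^m, ℝ)}. Consequently R induces a linear equivalence of the quotient vector space C^∞(ℝ^m)/D_k with C^∞(ℝ^{m−k}). -/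
open scoped BigOperators

noncomputable section

/-- The space `C^∞(ℝ^m, ℝ)` of smooth real-valued functions on `ℝ^m`,
as a linear subspace of all functions `(Fin m → ℝ) → ℝ`. -/
def SmoothFns (m : ℕ) : Submodule ℝ ((Fin m → ℝ) → ℝ) where
  carrier := {f | ContDiff ℝ (⊤ : ℕ∞) f}
  add_mem' {a b} (hf : ContDiff ℝ (⊤ : ℕ∞) a) (hg : ContDiff ℝ (⊤ : ℕ∞) b) := hf.add hg
  zero_mem' := show ContDiff ℝ (⊤ : ℕ∞) (fun _ => (0:ℝ)) from contDiff_const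
  smul_mem' c f (hf : ContDiff ℝ (⊤ : ℕ∞) f) := hf.const_smul c

/-- The subspace `D_k ⊆ C^∞(ℝ^m, ℝ)` of functions of the form
`x ↦ ∑_{i=1}^{k} x_i · g_i(x)` with each `g_i` smooth. -/
def Dsub (m k : ℕ) (hkm : k ≤ m) : Submodule ℝ (SmoothFns m) where
  carrier := {f | ∃ g : Fin k → SmoothFns m,
    ∀ x : Fin m → ℝ, (f : (Fin m → ℝ) → ℝ) x
      = ∑ i : Fin k, x (Fin.castLE hkm i) * (g i : (Fin m → ℝ) → ℝ) x}
  add_mem' := by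
    rintro f₁ f₂ ⟨g₁, hg₁⟩ ⟨g₂, hg₂⟩
    exact ⟨fun i => g₁ i + g₂ i, fun x => by
      simp [hg₁ x, hg₂ x, mul_add, Finset.sum_add_distrib]⟩
  zero_mem' := ⟨0, by simp⟩
  smul_mem' := by
    rintro c f ⟨g, hg⟩
    exact ⟨fun i => c • g i, fun x => by
      simp only [Submodule.coe_smul, Pi.smul_apply, smul_eq_mul, hg x, Finset.mul_sum]
      exact Finset.sum_congr rfl fun i _ => by ring⟩

/-- The linear embedding `ℝ^{m-k} → ℝ^m`, `(x_{k+1},…,x_m) ↦ (0,…,0,x_{k+1},…,x_m)`. -/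
def coordEmbed (m k : ℕ) : (Fin (m - k) → ℝ) →ₗ[ℝ] (Fin m → ℝ) where
  toFun y i := if h : (i : ℕ) < k then 0 else y ⟨(i : ℕ) - k, by
    have := i.isLt; omega⟩
  map_add' y z := by
    funext i; by_cases h : (i : ℕ) < k <;> simp [h]
  map_smul' c y := by
    funext i; by_cases h : (i : ℕ) < k <;> simp [h]

/-- The restriction map `R : C^∞(ℝ^m) → C^∞(ℝ^{m-k})`,
`(Rf)(x_{k+1},…,x_m) = f(0,…,0,x_{k+1},…,x_m)`. -/
def restrictMap (m k : ℕ) : SmoothFns m →ₗ[ℝ] SmoothFns (m - k) where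
  toFun f := ⟨fun y => (f : (Fin m → ℝ) → ℝ) (coordEmbed m k y),
    ContDiff.comp (show ContDiff ℝ (⊤ : ℕ∞) (f : (Fin m → ℝ) → ℝ) from f.2)
      (coordEmbed m k).toContinuousLinearMap.contDiff⟩
  map_add' f g := rfl
  map_smul' c f := rfl

open Set Function Filter
open scoped Topology ContDiff NNReal ENNReal

noncomputable section
namespace HadamardAux

variable {m : ℕ}

/-- basis vector -/
def ee (i₀ : Fin m) : Fin m → ℝ := Pi.single i₀ 1

/-- zero out coordinate i₀ -/
def piL (i₀ : Fin m) : (Fin m → ℝ) →L[ℝ] (Fin m → ℝ) :=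
  ContinuousLinearMap.id ℝ _ - (ContinuousLinearMap.proj i₀).smulRight (ee i₀)

lemma piL_apply (i₀ : Fin m) (y : Fin m → ℝ) : piL i₀ y = y - y i₀ • ee i₀ := rfl

lemma piL_apply' (i₀ : Fin m) (y : Fin m → ℝ) (l : Fin m) :
    piL i₀ y l = if l = i₀ then 0 else y l := by
  rw [piL_apply]
  by_cases h : l = i₀ <;> simp [h, ee, Pi.single_apply]

lemma sub_piL (i₀ : Fin m) (y : Fin m → ℝ) : y - piL i₀ y = y i₀ • ee i₀ := by
  rw [piL_apply]; abel

variable (i₀ : Fin m) (p : FormalMultilinearSeries ℝ (Fin m → ℝ) ℝ)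

lemma param_smooth (n : ℕ) : ∀ {F : Type} [NormedAddCommGroup F] [NormedSpace ℝ F]
    [CompleteSpace F] (H : (Fin m → ℝ) → ℝ → F), ContDiff ℝ ∞ (Function.uncurry H) →
    ContDiff ℝ n (fun x => ∫ t in (0:ℝ)..1, H x t) := by
  induction n with
  | zero =>
    intro F _ _ _ H hH
    rw [Nat.cast_zero, contDiff_zero]
    exact intervalIntegral.continuous_parametric_intervalIntegral_of_continuous' hH.continuous 0 1
  | succ n ih =>
    intro F _ _ _ H hH
    set H' : (Fin m → ℝ) → ℝ → ((Fin m → ℝ) →L[ℝ] F) := fun x t =>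
      (fderiv ℝ (Function.uncurry H) (x, t)).comp (ContinuousLinearMap.inl ℝ (Fin m → ℝ) ℝ)
      with hH'
    have hH'c : ContDiff ℝ ∞ (Function.uncurry H') := by
      have h1 : ContDiff ℝ ∞ (fderiv ℝ (Function.uncurry H)) := (contDiff_infty_iff_fderiv.mp hH).2
      exact h1.clm_comp contDiff_const
    have hd : ∀ y t, HasFDerivAt (fun z => H z t) (H' y t) y := by
      intro y t
      have h1 : HasFDerivAt (Function.uncurry H) (fderiv ℝ (Function.uncurry H) (y, t)) (y, t) :=
        ((hH.differentiable (by simp)) (y, t)).hasFDerivAt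
      have h2 : HasFDerivAt (fun z : Fin m → ℝ => (z, t))
          (ContinuousLinearMap.inl ℝ (Fin m → ℝ) ℝ) y :=
        hasFDerivAt_prodMk_left y t
      exact h1.comp y h2
    have hint : ∀ x₀, HasFDerivAt (fun x => ∫ t in (0:ℝ)..1, H x t)
        (∫ t in (0:ℝ)..1, H' x₀ t) x₀ := by
      intro x₀
      obtain ⟨C, hC⟩ := ((isCompact_closedBall x₀ 1).prod (isCompact_Icc (a := (0:ℝ)) (b := 1))
        ).exists_bound_of_continuousOn hH'c.continuous.continuousOn
      refine intervalIntegral.hasFDerivAt_integral_of_dominated_of_fderiv_le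
        (bound := fun _ => C) (Metric.ball_mem_nhds x₀ one_pos) ?_ ?_ ?_ ?_ ?_ ?_
      · exact Filter.Eventually.of_forall fun x =>
          (hH.continuous.uncurry_left x).aestronglyMeasurable
      · exact (hH.continuous.uncurry_left x₀).intervalIntegrable 0 1
      · exact (hH'c.continuous.uncurry_left x₀).aestronglyMeasurable
      · refine Filter.Eventually.of_forall fun t ht x hx => ?_
        have ht' : t ∈ Set.Ioc (0:ℝ) 1 := by rwa [Set.uIoc_of_le zero_le_one] at ht
        exact hC (x, t) ⟨Metric.ball_subset_closedBall hx, Set.Ioc_subset_Icc_self ht'⟩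
      · exact intervalIntegrable_const
      · exact Filter.Eventually.of_forall fun t _ x _ => hd x t
    have hfd : fderiv ℝ (fun x => ∫ t in (0:ℝ)..1, H x t) = fun x => ∫ t in (0:ℝ)..1, H' x t :=
      funext fun x => (hint x).fderiv
    rw [Nat.cast_add, Nat.cast_one, contDiff_succ_iff_fderiv]
    refine ⟨fun x => (hint x).differentiableAt, fun h => by simp at h, ?_⟩
    rw [hfd]
    exact ih H' hH'c

lemma div_coord (i₀ : Fin m) (F : (Fin m → ℝ) → ℝ) (hF : ContDiff ℝ (⊤ : ℕ∞) F)
    (h0 : ∀ x, x i₀ = 0 → F x = 0) :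
    ∃ G : (Fin m → ℝ) → ℝ, ContDiff ℝ (⊤ : ℕ∞) G ∧ ∀ x, F x = x i₀ * G x := by
  classical
  set H : (Fin m → ℝ) → ℝ → ℝ :=
    fun x t => fderiv ℝ F (piL i₀ x + (t * x i₀) • ee i₀) (ee i₀) with hHdef
  have hHc : ContDiff ℝ ∞ (Function.uncurry H) := by
    have h1 : ContDiff ℝ ∞ (fderiv ℝ F) := (contDiff_infty_iff_fderiv.mp hF).2
    have h2 : ContDiff ℝ ∞ (fun p : (Fin m → ℝ) × ℝ => piL i₀ p.1 + (p.2 * p.1 i₀) • ee i₀) := by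
      fun_prop
    exact (h1.comp h2).clm_apply contDiff_const
  refine ⟨fun x => ∫ t in (0:ℝ)..1, H x t,
    contDiff_infty.mpr fun n => param_smooth n H hHc, fun x => ?_⟩
  have hx1 : piL i₀ x + ((1:ℝ) * x i₀) • ee i₀ = x := by
    rw [one_mul, ← sub_piL]; abel
  have hx0 : piL i₀ x + ((0:ℝ) * x i₀) • ee i₀ = piL i₀ x := by simp
  have hF0 : F (piL i₀ x) = 0 := h0 _ (by rw [piL_apply' i₀ x i₀, if_pos rfl])
  have hderiv : ∀ t ∈ Set.uIcc (0:ℝ) 1,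
      HasDerivAt (fun s : ℝ => F (piL i₀ x + (s * x i₀) • ee i₀)) (x i₀ * H x t) t := by
    intro t _
    have hp : HasDerivAt (fun s : ℝ => piL i₀ x + (s * x i₀) • ee i₀) (((1:ℝ) * x i₀) • ee i₀) t :=
      (((hasDerivAt_id' t).mul_const (x i₀)).smul_const (ee i₀)).const_add _
    have hFd := ((hF.differentiable (by simp)) (piL i₀ x + (t * x i₀) • ee i₀)).hasFDerivAt.comp_hasDerivAt t hp
    have he : fderiv ℝ F (piL i₀ x + (t * x i₀) • ee i₀) (((1:ℝ) * x i₀) • ee i₀)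
        = x i₀ * H x t := by
      rw [one_mul, ContinuousLinearMap.map_smul, smul_eq_mul, hHdef]
    exact hFd.congr_deriv he
  have hcontH : Continuous (H x) := hHc.continuous.uncurry_left x
  have := intervalIntegral.integral_eq_sub_of_hasDerivAt hderiv
    ((continuous_const.mul hcontH).intervalIntegrable 0 1)
  rw [intervalIntegral.integral_const_mul] at this
  beta_reduce at this
  have e1 : F (piL i₀ x + ((1:ℝ) * x i₀) • ee i₀) = F x := by rw [hx1]
  have e0 : F (piL i₀ x + ((0:ℝ) * x i₀) • ee i₀) = 0 := by rw [hx0, hF0]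
  rw [e1, e0, sub_zero] at this
  exact this.symm


lemma hadamard (s : Finset (Fin m)) :
    ∀ F : (Fin m → ℝ) → ℝ, ContDiff ℝ (⊤ : ℕ∞) F →
      (∀ x : Fin m → ℝ, (∀ i ∈ s, x i = 0) → F x = 0) →
      ∃ G : Fin m → ((Fin m → ℝ) → ℝ), (∀ i, ContDiff ℝ (⊤ : ℕ∞) (G i)) ∧
        ∀ x, F x = ∑ i ∈ s, x i * G i x := by
  classical
  induction s using Finset.induction_on with
  | empty =>
    intro F hF h0
    exact ⟨fun _ => 0, fun _ => contDiff_const,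
      fun x => by simpa using h0 x (by simp)⟩
  | @insert i₀ s hi₀ ih =>
    intro F hF h0
    set F₁ : (Fin m → ℝ) → ℝ := fun x => F (piL i₀ x) with hF₁def
    have hF₁c : ContDiff ℝ (⊤ : ℕ∞) F₁ := hF.comp (piL i₀).contDiff
    have hdiff0 : ∀ x : Fin m → ℝ, x i₀ = 0 → F x - F₁ x = 0 := by
      intro x hx
      have hpx : piL i₀ x = x := by rw [piL_apply, hx, zero_smul, sub_zero]
      rw [hF₁def]
      simp only [hpx, sub_self]
    obtain ⟨G₀, hG₀c, hG₀⟩ := div_coord i₀ (fun x => F x - F₁ x) (hF.sub hF₁c) hdiff0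
    have h0' : ∀ x : Fin m → ℝ, (∀ i ∈ s, x i = 0) → F₁ x = 0 := by
      intro x hx
      apply h0
      intro i hi
      rcases Finset.mem_insert.mp hi with rfl | hi'
      · rw [piL_apply', if_pos rfl]
      · rw [piL_apply', if_neg (fun hc : i = i₀ => hi₀ (hc ▸ hi'))]
        exact hx i hi'
    obtain ⟨G₁, hG₁c, hG₁⟩ := ih F₁ hF₁c h0'
    refine ⟨fun i => if i = i₀ then G₀ else G₁ i, fun i => ?_, fun x => ?_⟩
    · by_cases hc : i = i₀
      · simp only [hc, if_pos]; exact hG₀c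
      · simp only [if_neg hc]; exact hG₁c i
    · rw [Finset.sum_insert hi₀]
      beta_reduce
      rw [if_pos rfl]
      have hrest : ∀ i ∈ s, x i * (if i = i₀ then G₀ else G₁ i) x = x i * G₁ i x := by
        intro i hi
        rw [if_neg (fun hc : i = i₀ => hi₀ (hc ▸ hi))]
      rw [Finset.sum_congr rfl hrest]
      calc F x = (F x - F₁ x) + F₁ x := by ring
        _ = x i₀ * G₀ x + ∑ i ∈ s, x i * G₁ i x := by rw [hG₀ x, hG₁ x]

end HadamardAux
end

/-- The map `R` is surjective, its kernel is `D_k`, and hence it induces a linear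
equivalence `C^∞(ℝ^m)/D_k ≃ C^∞(ℝ^{m-k})`. -/
theorem restrictMap_surjective_ker_eq (m k : ℕ) (hm : 1 ≤ m) (hk1 : 1 ≤ k) (hkm : k ≤ m) :
    Function.Surjective (restrictMap m k) ∧
    LinearMap.ker (restrictMap m k) = Dsub m k hkm ∧
    Nonempty ((SmoothFns m ⧸ Dsub m k hkm) ≃ₗ[ℝ] SmoothFns (m - k)) := by
  classical
  -- the projection onto the last m - k coordinates
  set P : (Fin m → ℝ) →L[ℝ] (Fin (m - k) → ℝ) :=
    ContinuousLinearMap.pi (fun j : Fin (m - k) =>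
      ContinuousLinearMap.proj (⟨(j : ℕ) + k, by have := j.isLt; omega⟩ : Fin m)) with hP
  have hPembed : ∀ y : Fin (m - k) → ℝ, P (coordEmbed m k y) = y := by
    intro y
    funext j
    have h1 : ¬ (((⟨(j : ℕ) + k, by have := j.isLt; omega⟩ : Fin m) : ℕ) < k) := by
      simp
    show coordEmbed m k y ⟨(j : ℕ) + k, by have := j.isLt; omega⟩ = y j
    show (if h : (((⟨(j : ℕ) + k, _⟩ : Fin m)) : ℕ) < k then 0 else y ⟨_ - k, _⟩) = y j
    rw [dif_neg h1]
    congr 1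
    apply Fin.ext
    simp
  have hsurj : Function.Surjective (restrictMap m k) := by
    intro f
    refine ⟨⟨fun x => (f : (Fin (m - k) → ℝ) → ℝ) (P x), ?_⟩, ?_⟩
    · exact ContDiff.comp (show ContDiff ℝ (⊤ : ℕ∞) (f : (Fin (m-k) → ℝ) → ℝ) from f.2) P.contDiff
    · apply Subtype.ext
      funext y
      show (f : (Fin (m - k) → ℝ) → ℝ) (P (coordEmbed m k y)) = (f : _ → ℝ) y
      rw [hPembed]
  have hker : LinearMap.ker (restrictMap m k) = Dsub m k hkm := by
    ext f
    rw [LinearMap.mem_ker]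
    constructor
    · intro h
      have he : ∀ y : Fin (m - k) → ℝ, (f : (Fin m → ℝ) → ℝ) (coordEmbed m k y) = 0 := by
        intro y
        exact congrFun (congrArg (fun v : SmoothFns (m - k) => (v : (Fin (m-k) → ℝ) → ℝ)) h) y
      have h0 : ∀ x : Fin m → ℝ,
          (∀ i ∈ Finset.image (Fin.castLE hkm) Finset.univ, x i = 0) →
          (f : (Fin m → ℝ) → ℝ) x = 0 := by
        intro x hx
        have hxe : x = coordEmbed m k (fun j : Fin (m - k) =>
            x ⟨(j : ℕ) + k, by have := j.isLt; omega⟩) := by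
          funext i
          show x i = if h : (i : ℕ) < k then 0 else _
          by_cases hik : (i : ℕ) < k
          · rw [dif_pos hik]
            apply hx
            refine Finset.mem_image.mpr ⟨⟨(i : ℕ), hik⟩, Finset.mem_univ _, ?_⟩
            apply Fin.ext
            rfl
          · rw [dif_neg hik]
            congr 1
            apply Fin.ext
            show (i : ℕ) = (i : ℕ) - k + k
            omega
        rw [hxe]
        exact he _
      obtain ⟨G, hGc, hG⟩ := HadamardAux.hadamard
        (Finset.image (Fin.castLE hkm) Finset.univ) (f : (Fin m → ℝ) → ℝ) f.2 h0
      refine ⟨fun i => ⟨G (Fin.castLE hkm i), hGc _⟩, fun x => ?_⟩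
      rw [hG x]
      rw [Finset.sum_image (fun a _ b _ hab =>
        Fin.ext (by simpa using congrArg Fin.val hab))]
    · rintro ⟨g, hg⟩
      apply Subtype.ext
      funext y
      show (f : (Fin m → ℝ) → ℝ) (coordEmbed m k y) = 0
      rw [hg]
      apply Finset.sum_eq_zero
      intro i _
      have : coordEmbed m k y (Fin.castLE hkm i) = 0 := by
        show (if h : ((Fin.castLE hkm i : Fin m) : ℕ) < k then 0 else _) = 0
        rw [dif_pos (by simpa using i.isLt)]
      rw [this, zero_mul]
  refine ⟨hsurj, hker, ⟨?_⟩⟩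
  exact (Submodule.quotEquivOfEq _ _ hker.symm).trans
    (LinearMap.quotKerEquivOfSurjective _ hsurj)

end
end

section
/- Exactness of the Koszul complex of the coordinate multiplication operators on C^∞(ℝ^m): let m ≥ 1 and 1 ≤ p ≤ m. Suppose c assigns to every p-tuple j : Fin p → Fin m a C^∞ function c(j) : ℝ^m → ℝ, is alternating (c(j ∘ σ) = sign(σ) · c(j) for every permutation σ of Fin p, and c(j) = 0 whenever j is not injective), and satisfies the cocycle condition: for every (p−1)-tuple j : Fin (p−1) → Fin m and every x ∈ ℝ^m, Σ_{k ∈ Fin m} x_k · c(Fin.cons k j)(x) = 0. Then there exists an alternating family b assigning to every (p+1)-tuple j : Fin (p+1) → Fin m a C^∞ function b(j) : ℝ^m → ℝ such that for all p-tuples j and all x ∈ ℝ^m, c(j)(x) = Σ_{k ∈ Fin m} x_k · b(Fin.cons k j)(x). -/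
open scoped NNReal ENNReal

lemma paramInt_contDiff {H : Type} [NormedAddCommGroup H] [NormedSpace ℝ H] [ProperSpace H]
    (n : ℕ) : ∀ {E : Type} [NormedAddCommGroup E] [NormedSpace ℝ E] [CompleteSpace E]
    (F : H → ℝ → E), ContDiff ℝ (⊤ : ℕ∞) (Function.uncurry F) →
      ContDiff ℝ n (fun x => ∫ t in (0:ℝ)..1, F x t) := by
  induction n with
  | zero =>
    intro E _ _ _ F hF
    exact contDiff_zero.2
      (intervalIntegral.continuous_parametric_intervalIntegral_of_continuous' hF.continuous 0 1)
  | succ n ih =>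
    intro E _ _ _ F hF
    set F' : H → ℝ → (H →L[ℝ] E) := fun x t =>
      (fderiv ℝ (Function.uncurry F) (x, t)).comp (ContinuousLinearMap.inl ℝ H ℝ) with hF'
    have hF'smooth : ContDiff ℝ (⊤ : ℕ∞) (Function.uncurry F') :=
      (hF.fderiv_right (m := ((⊤ : ℕ∞) : WithTop ℕ∞)) (by simp)).clm_comp contDiff_const
    have hd : ∀ x t, HasFDerivAt (fun y => F y t) (F' x t) x := by
      intro x t
      have h1 : HasFDerivAt (fun y : H => (y, t)) (ContinuousLinearMap.inl ℝ H ℝ) x :=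
        hasFDerivAt_prodMk_left x t
      exact (hF.differentiable (by simp) (x, t)).hasFDerivAt.comp x h1
    refine contDiff_succ_iff_hasFDerivAt.2
      ⟨fun x => ∫ t in (0:ℝ)..1, F' x t, ih F' hF'smooth, fun x => ?_⟩
    obtain ⟨C, hC⟩ := ((isCompact_closedBall x 1).prod (isCompact_Icc (a := (0:ℝ)) (b := 1))
      ).exists_bound_of_continuousOn hF'smooth.continuous.continuousOn
    have hcF : ∀ y, Continuous (F y) := fun y =>
      hF.continuous.comp (continuous_const.prodMk continuous_id)
    refine intervalIntegral.hasFDerivAt_integral_of_dominated_of_fderiv_le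
      (μ := MeasureTheory.volume) (bound := fun _ => C)
      (Metric.closedBall_mem_nhds x one_pos) ?_ ((hcF x).intervalIntegrable 0 1) ?_ ?_
      intervalIntegrable_const ?_
    · filter_upwards with y
      exact (hcF y).aestronglyMeasurable
    · exact (hF'smooth.continuous.comp (continuous_const.prodMk continuous_id)).aestronglyMeasurable
    · filter_upwards with t ht y hy
      rw [Set.uIoc_of_le zero_le_one] at ht
      exact hC (y, t) ⟨hy, Set.Ioc_subset_Icc_self ht⟩
    · filter_upwards with t ht y hy
      exact hd y t

open scoped BigOperators

/-- Exactness in positive degrees of the Koszul complex of the coordinate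
multiplication operators `(T₁,…,T_m)` on `C^∞(ℝ^m)`.  Here the degree is `p + 1`
with `1 ≤ p + 1 ≤ m`: every alternating family `c` of smooth functions indexed by
`(p+1)`-tuples from `Fin m` satisfying the cocycle condition
`∑_k x_k · c(k, j₁,…,j_p)(x) = 0` is a coboundary: `c(j)(x) = ∑_k x_k · b(k, j)(x)`
for some alternating family `b` of smooth functions indexed by `(p+2)`-tuples. -/
theorem koszul_exact_coord_mul (m p : ℕ) (hm : 1 ≤ m) (hpm : p + 1 ≤ m)
    (c : (Fin (p + 1) → Fin m) → ((Fin m → ℝ) → ℝ))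
    (hsmooth : ∀ j, ContDiff ℝ (⊤ : ℕ∞) (c j))
    (halt : ∀ (j : Fin (p + 1) → Fin m) (σ : Equiv.Perm (Fin (p + 1))) (x : Fin m → ℝ),
      c (j ∘ σ) x = ((Equiv.Perm.sign σ : ℤ) : ℝ) * c j x)
    (halt' : ∀ j : Fin (p + 1) → Fin m, ¬ Function.Injective j → c j = 0)
    (hcocycle : ∀ (j : Fin p → Fin m) (x : Fin m → ℝ),
      ∑ k : Fin m, x k * c (Fin.cons k j) x = 0) :
    ∃ b : (Fin (p + 2) → Fin m) → ((Fin m → ℝ) → ℝ),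
      (∀ j, ContDiff ℝ (⊤ : ℕ∞) (b j)) ∧
      (∀ (j : Fin (p + 2) → Fin m) (σ : Equiv.Perm (Fin (p + 2))) (x : Fin m → ℝ),
        b (j ∘ σ) x = ((Equiv.Perm.sign σ : ℤ) : ℝ) * b j x) ∧
      (∀ j : Fin (p + 2) → Fin m, ¬ Function.Injective j → b j = 0) ∧
      (∀ (j : Fin (p + 1) → Fin m) (x : Fin m → ℝ),
        c j x = ∑ k : Fin m, x k * b (Fin.cons k j) x) := by
  classical
  have hA : ∀ j, ContDiff ℝ (⊤ : ℕ∞) (c j) := fun j => hsmooth j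
  have hdiff : ∀ j, Differentiable ℝ (c j) := fun j => (hA j).differentiable (by simp)
  have hcontc : ∀ j, Continuous (c j) := fun j => (hA j).continuous
  -- partial derivatives evaluated on coordinate vectors
  set pd : ((Fin m → ℝ) → ℝ) → Fin m → (Fin m → ℝ) → ℝ :=
    fun f l y => fderiv ℝ f y (Pi.single l 1) with hpd
  have hpdA : ∀ (j) (l : Fin m), ContDiff ℝ (⊤ : ℕ∞) (pd (c j) l) := by
    intro j l
    exact ((hA j).fderiv_right (m := ((⊤ : ℕ∞) : WithTop ℕ∞)) (by simp)).clm_apply contDiff_const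
  have hpdsmul : ∀ (s : ℝ) (f : (Fin m → ℝ) → ℝ), Differentiable ℝ f → ∀ (l : Fin m) y,
      pd (fun x => s * f x) l y = s * pd f l y := by
    intro s f hf l y
    rw [hpd]
    simp only
    rw [fderiv_const_mul (hf y) s]
    simp
  -- the differentiated cocycle identity
  have hcder : ∀ (j' : Fin p → Fin m) (l : Fin m) (y : Fin m → ℝ),
      ∑ k : Fin m, y k * pd (c (Fin.cons k j')) l y = - c (Fin.cons l j') y := by
    intro j' l y
    have hterm : ∀ k : Fin m, HasFDerivAt (fun x : Fin m → ℝ => x k * c (Fin.cons k j') x)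
        ((y k) • fderiv ℝ (c (Fin.cons k j')) y
          + (c (Fin.cons k j') y) • (ContinuousLinearMap.proj k :
              (Fin m → ℝ) →L[ℝ] ℝ)) y := by
      intro k
      exact (ContinuousLinearMap.proj k : (Fin m → ℝ) →L[ℝ] ℝ).hasFDerivAt.mul
        ((hdiff _) y).hasFDerivAt
    have hsum := HasFDerivAt.fun_sum (fun k (_ : k ∈ Finset.univ) => hterm k)
    have hzero : (fun x : Fin m → ℝ => ∑ k : Fin m, x k * c (Fin.cons k j') x)
        = fun _ => (0:ℝ) := funext (fun x => hcocycle j' x)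
    rw [hzero] at hsum
    have huniq := hsum.unique (hasFDerivAt_const (0:ℝ) y)
    have happ := congrArg (fun (L : (Fin m → ℝ) →L[ℝ] ℝ) => L (Pi.single l 1)) huniq
    simp only [ContinuousLinearMap.coe_sum', Finset.sum_apply,
      ContinuousLinearMap.add_apply, ContinuousLinearMap.coe_smul', Pi.smul_apply,
      ContinuousLinearMap.proj_apply, ContinuousLinearMap.zero_apply, smul_eq_mul] at happ
    rw [Finset.sum_add_distrib] at happ
    have h2 : ∑ k : Fin m, c (Fin.cons k j') y * (Pi.single l (1:ℝ) : Fin m → ℝ) k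
        = c (Fin.cons l j') y := by
      have : ∀ k : Fin m, c (Fin.cons k j') y * (Pi.single l (1:ℝ) : Fin m → ℝ) k
          = if k = l then c (Fin.cons k j') y else 0 := by
        intro k
        rw [Pi.single_apply]
        split_ifs <;> simp
      rw [Finset.sum_congr rfl (fun k _ => this k), Finset.sum_ite_eq' Finset.univ l]
      simp
    rw [h2] at happ
    rw [hpd]
    simp only
    linarith [happ]
  -- sign squared is one
  have hsgn2 : ∀ {n : ℕ} (τ : Equiv.Perm (Fin n)),
      ((Equiv.Perm.sign τ : ℤ) : ℝ) * ((Equiv.Perm.sign τ : ℤ) : ℝ) = 1 := by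
    intro n τ
    rcases Int.units_eq_one_or (Equiv.Perm.sign τ) with h | h <;> rw [h] <;> norm_num
  have hcfun : ∀ (j : Fin (p+1) → Fin m) (σ : Equiv.Perm (Fin (p+1))),
      c (j ∘ σ) = fun x => ((Equiv.Perm.sign σ : ℤ) : ℝ) * c j x := fun j σ =>
    funext (halt j σ)
  -- update in terms of cons and cycleRange
  have hupd : ∀ (j : Fin (p+1) → Fin m) (a' : Fin (p+1)) (k : Fin m),
      Function.update j a' k = Fin.cons k (j ∘ a'.succAbove) ∘ ⇑(a'.cycleRange) := by
    intro j a' k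
    funext i
    by_cases h : i = a'
    · subst h
      simp [Fin.cycleRange_self]
    · obtain ⟨l, rfl⟩ := Fin.exists_succAbove_eq h
      rw [Function.update_of_ne h, Function.comp_apply, Fin.cycleRange_succAbove,
        Fin.cons_succ, Function.comp_apply]
  have hcupd : ∀ (j : Fin (p+1) → Fin m) (a' : Fin (p+1)) (k : Fin m) (x),
      c (Function.update j a' k) x
        = ((-1:ℝ))^(a':ℕ) * c (Fin.cons k (j ∘ a'.succAbove)) x := by
    intro j a' k x
    rw [hupd j a' k, halt (Fin.cons k (j ∘ a'.succAbove)) a'.cycleRange x]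
    congr 1
    rw [Fin.sign_cycleRange]
    push_cast
    simp
  have hccons : ∀ (j : Fin (p+1) → Fin m) (a' : Fin (p+1)) (x),
      c (Fin.cons (j a') (j ∘ a'.succAbove)) x = ((-1:ℝ))^(a':ℕ) * c j x := by
    intro j a' x
    have h1 := hcupd j a' (j a') x
    rw [Function.update_eq_self] at h1
    have hu : ((-1:ℝ))^(a':ℕ) * ((-1:ℝ))^(a':ℕ) = 1 := by
      rw [← pow_add]
      exact (neg_one_pow_eq_one_iff_even (by norm_num)).2 ⟨(a':ℕ), rfl⟩
    rw [h1, ← mul_assoc, hu, one_mul]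
  -- the antisymmetrized Koszul-type cochain
  set g : (Fin (p+2) → Fin m) → (Fin m → ℝ) → ℝ := fun j y =>
    ∑ σ : Equiv.Perm (Fin (p+2)),
      ((Equiv.Perm.sign σ : ℤ) : ℝ) * pd (c (j ∘ σ ∘ Fin.succ)) (j (σ 0)) y with hgdef
  have hgA : ∀ j, ContDiff ℝ (⊤ : ℕ∞) (g j) := by
    intro j
    simp only [hgdef]
    exact ContDiff.sum (fun σ _ => contDiff_const.mul (hpdA (j ∘ σ ∘ Fin.succ) (j (σ 0))))
  have hgcont : ∀ j, Continuous (g j) := fun j => (hgA j).continuous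
  -- alternation of g
  have hgalt : ∀ (j : Fin (p+2) → Fin m) (τ : Equiv.Perm (Fin (p+2))) (y),
      g (j ∘ τ) y = ((Equiv.Perm.sign τ : ℤ) : ℝ) * g j y := by
    intro j τ y
    rw [hgdef]
    simp only
    rw [Finset.mul_sum]
    rw [← Equiv.sum_comp (Equiv.mulLeft τ)
      (fun ρ => ((Equiv.Perm.sign τ : ℤ) : ℝ) *
        (((Equiv.Perm.sign ρ : ℤ) : ℝ) * pd (c (j ∘ ρ ∘ Fin.succ)) (j (ρ 0)) y))]
    refine Finset.sum_congr rfl (fun σ _ => ?_)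
    have h1 : (j ∘ τ) ∘ σ ∘ Fin.succ = j ∘ (Equiv.mulLeft τ σ) ∘ Fin.succ := by
      funext i; simp [Equiv.Perm.mul_apply]
    have h2 : (j ∘ τ) (σ 0) = j ((Equiv.mulLeft τ σ) 0) := by
      simp [Equiv.Perm.mul_apply]
    rw [h1, h2]
    have h3 : ((Equiv.Perm.sign (Equiv.mulLeft τ σ) : ℤ) : ℝ)
        = ((Equiv.Perm.sign τ : ℤ) : ℝ) * ((Equiv.Perm.sign σ : ℤ) : ℝ) := by
      have he : Equiv.mulLeft τ σ = τ * σ := rfl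
      rw [he, Equiv.Perm.sign_mul]
      push_cast
      ring
    rw [h3]
    set P := pd (c (j ∘ ⇑(Equiv.mulLeft τ σ) ∘ Fin.succ)) (j ((Equiv.mulLeft τ σ) 0)) y with hP
    linear_combination (-(((Equiv.Perm.sign σ : ℤ):ℝ) * P)) * hsgn2 τ
  have hgzero : ∀ (j : Fin (p+2) → Fin m), ¬ Function.Injective j → ∀ y, g j y = 0 := by
    intro j hj y
    rw [Function.not_injective_iff] at hj
    obtain ⟨a, b, hab, hne⟩ := hj
    have hjτ : j ∘ ⇑(Equiv.swap a b) = j := by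
      funext i
      rcases eq_or_ne i a with rfl | hia
      · simp [Equiv.swap_apply_left, hab]
      · rcases eq_or_ne i b with rfl | hib
        · simp [Equiv.swap_apply_right, hab]
        · simp [Equiv.swap_apply_of_ne_of_ne hia hib]
    have h1 := hgalt j (Equiv.swap a b) y
    rw [hjτ] at h1
    rw [Equiv.Perm.sign_swap hne] at h1
    norm_num at h1
    linarith
  set N : ℝ := ((p+1).factorial : ℝ) with hN
  have hNpos : (0:ℝ) < N := by rw [hN]; exact_mod_cast Nat.factorial_pos (p+1)
  -- the key Euler-type identity
  have hkey : ∀ (j : Fin (p+1) → Fin m) (y : Fin m → ℝ),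
      ∑ k : Fin m, y k * g (Fin.cons k j) y
        = N * ((∑ k : Fin m, y k * pd (c j) k y) + (p+1) * c j y) := by
    intro j y
    set F : Equiv.Perm (Fin (p+2)) → ℝ := fun σ => ∑ k : Fin m,
      y k * (((Equiv.Perm.sign σ : ℤ):ℝ) *
        pd (c ((Fin.cons k j : Fin (p+2) → Fin m) ∘ ⇑σ ∘ Fin.succ))
          ((Fin.cons k j : Fin (p+2) → Fin m) (σ 0)) y) with hF
    have h1 : ∑ k : Fin m, y k * g (Fin.cons k j) y = ∑ σ : Equiv.Perm (Fin (p+2)), F σ := by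
      have e1 : ∀ kk : Fin m, y kk * g (Fin.cons kk j) y = ∑ σ : Equiv.Perm (Fin (p+2)),
          y kk * (((Equiv.Perm.sign σ : ℤ):ℝ) *
            pd (c ((Fin.cons kk j : Fin (p+2) → Fin m) ∘ ⇑σ ∘ Fin.succ))
              ((Fin.cons kk j : Fin (p+2) → Fin m) (σ 0)) y) := by
        intro kk; rw [hgdef]; exact Finset.mul_sum _ _ _
      rw [Finset.sum_congr rfl (fun k (_ : k ∈ Finset.univ) => e1 k)]
      exact Finset.sum_comm
    have h2 : ∑ σ : Equiv.Perm (Fin (p+2)), F σ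
        = ∑ a : Fin (p+2), ∑ π : Equiv.Perm (Fin (p+1)),
            F (Equiv.Perm.decomposeFin.symm (a, π)) := by
      rw [← Equiv.sum_comp Equiv.Perm.decomposeFin.symm F, Fintype.sum_prod_type]
    have hcase0 : ∀ π : Equiv.Perm (Fin (p+1)),
        F (Equiv.Perm.decomposeFin.symm (0, π)) = ∑ k : Fin m, y k * pd (c j) k y := by
      intro π
      simp only [hF]
      refine Finset.sum_congr rfl (fun k _ => ?_)
      have e0 : (Equiv.Perm.decomposeFin.symm (0, π)) 0 = 0 :=
        Equiv.Perm.decomposeFin_symm_apply_zero 0 π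
      have ecomp : (Fin.cons k j : Fin (p+2) → Fin m) ∘
          ⇑(Equiv.Perm.decomposeFin.symm (0, π)) ∘ Fin.succ = j ∘ ⇑π := by
        funext i
        simp only [Function.comp_apply, Equiv.Perm.decomposeFin_symm_apply_succ]
        rw [Equiv.swap_self]
        simp [Fin.cons_succ]
      have esign : ((Equiv.Perm.sign (Equiv.Perm.decomposeFin.symm
          ((0 : Fin (p+2)), π)) : ℤ) : ℝ) = ((Equiv.Perm.sign π : ℤ) : ℝ) := by
        rw [Equiv.Perm.decomposeFin.symm_sign]
        simp
      rw [ecomp, e0, esign, Fin.cons_zero]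
      rw [hcfun j π, hpdsmul _ _ (hdiff j) k y]
      linear_combination (y k * pd (c j) k y) * hsgn2 π
    have hcaseS : ∀ (a' : Fin (p+1)) (π : Equiv.Perm (Fin (p+1))),
        F (Equiv.Perm.decomposeFin.symm (a'.succ, π)) = c j y := by
      intro a' π
      have hupdfun : ∀ k : Fin m, c (Function.update j a' k)
          = fun x => ((-1:ℝ))^(a':ℕ) * c (Fin.cons k (j ∘ a'.succAbove)) x :=
        fun k => funext (hcupd j a' k)
      have e0 : (Equiv.Perm.decomposeFin.symm (a'.succ, π)) 0 = a'.succ :=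
        Equiv.Perm.decomposeFin_symm_apply_zero a'.succ π
      have esign : ((Equiv.Perm.sign (Equiv.Perm.decomposeFin.symm
          (a'.succ, π)) : ℤ) : ℝ) = -((Equiv.Perm.sign π : ℤ) : ℝ) := by
        rw [Equiv.Perm.decomposeFin.symm_sign]
        simp [Fin.succ_ne_zero]
      have ecomp : ∀ k : Fin m, (Fin.cons k j : Fin (p+2) → Fin m) ∘
          ⇑(Equiv.Perm.decomposeFin.symm (a'.succ, π)) ∘ Fin.succ
            = Function.update j a' k ∘ ⇑π := by
        intro k
        funext i
        simp only [Function.comp_apply, Equiv.Perm.decomposeFin_symm_apply_succ]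
        by_cases h : π i = a'
        · rw [h, Equiv.swap_apply_right, Fin.cons_zero, Function.update_self]
        · have hne : (π i).succ ≠ a'.succ := fun hc => h (Fin.succ_injective _ hc)
          rw [Equiv.swap_apply_of_ne_of_ne (Fin.succ_ne_zero (π i)) hne, Fin.cons_succ,
            Function.update_of_ne h]
      have hu : ((-1:ℝ))^(a':ℕ) * ((-1:ℝ))^(a':ℕ) = 1 := by
        rw [← pow_add]
        exact (neg_one_pow_eq_one_iff_even (by norm_num)).2 ⟨(a':ℕ), rfl⟩
      have hstep : F (Equiv.Perm.decomposeFin.symm (a'.succ, π))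
          = (-((-1:ℝ)^(a':ℕ))) * ∑ k : Fin m, y k *
              pd (c (Fin.cons k (j ∘ a'.succAbove))) (j a') y := by
        simp only [hF]
        rw [Finset.mul_sum]
        refine Finset.sum_congr rfl (fun k _ => ?_)
        rw [ecomp k, e0, Fin.cons_succ]
        rw [hcfun (Function.update j a' k) π, hpdsmul _ _ (hdiff _) _ y]
        rw [hupdfun k, hpdsmul _ _ (hdiff _) _ y]
        rw [esign]
        set P := pd (c (Fin.cons k (j ∘ a'.succAbove))) (j a') y with hP
        linear_combination (-((-1:ℝ)^(a':ℕ) * y k * P)) * hsgn2 π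
      rw [hstep, hcder (j ∘ a'.succAbove) (j a') y, hccons j a' y]
      linear_combination (c j y) * hu
    rw [h1, h2, Fin.sum_univ_succ]
    have hc0 : ∑ π : Equiv.Perm (Fin (p+1)),
        F (Equiv.Perm.decomposeFin.symm ((0 : Fin (p+2)), π))
          = N * ∑ k : Fin m, y k * pd (c j) k y := by
      rw [Finset.sum_congr rfl (fun π _ => hcase0 π), Finset.sum_const]
      rw [Finset.card_univ, Fintype.card_perm, Fintype.card_fin, nsmul_eq_mul, hN]
    have hcS : ∀ a' : Fin (p+1), ∑ π : Equiv.Perm (Fin (p+1)),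
        F (Equiv.Perm.decomposeFin.symm (a'.succ, π)) = N * c j y := by
      intro a'
      rw [Finset.sum_congr rfl (fun π _ => hcaseS a' π), Finset.sum_const]
      rw [Finset.card_univ, Fintype.card_perm, Fintype.card_fin, nsmul_eq_mul, hN]
    rw [hc0, Finset.sum_congr rfl (fun a' (_ : a' ∈ Finset.univ) => hcS a'), Finset.sum_const]
    rw [Finset.card_univ, Fintype.card_fin, nsmul_eq_mul]
    push_cast
    ring
  -- definition of b
  set b : (Fin (p + 2) → Fin m) → ((Fin m → ℝ) → ℝ) := fun j x =>
    N⁻¹ * ∫ t in (0:ℝ)..1, t^(p+1) * g j (t • x) with hbdef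
  have hbA : ∀ j, ContDiff ℝ (⊤ : ℕ∞) (b j) := by
    intro j
    simp only [hbdef]
    exact contDiff_const.mul (contDiff_infty.2 (fun n => paramInt_contDiff n
      (fun x t => t^(p+1) * g j (t • x))
      ((contDiff_snd.pow (p+1)).mul ((hgA j).comp (contDiff_snd.smul contDiff_fst)))))
  have hbsmooth : ∀ j, ContDiff ℝ (⊤ : ℕ∞) (b j) := by
    intro j
    exact hbA j
  have hbalt : ∀ (j : Fin (p+2) → Fin m) (σ : Equiv.Perm (Fin (p+2))) (x : Fin m → ℝ),
      b (j ∘ σ) x = ((Equiv.Perm.sign σ : ℤ):ℝ) * b j x := by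
    intro j σ x
    simp only [hbdef]
    have h1 : (fun t : ℝ => t^(p+1) * g (j ∘ σ) (t • x))
        = fun t => ((Equiv.Perm.sign σ : ℤ):ℝ) * (t^(p+1) * g j (t • x)) := by
      funext t; rw [hgalt]; ring
    rw [h1, intervalIntegral.integral_const_mul]
    ring
  have hbzero : ∀ j : Fin (p+2) → Fin m, ¬ Function.Injective j → b j = 0 := by
    intro j hj
    funext x
    simp only [hbdef]
    have h1 : (fun t : ℝ => t^(p+1) * g j (t • x)) = fun _ => (0:ℝ) := by
      funext t; rw [hgzero j hj]; ring
    rw [h1]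
    simp
  -- the homotopy identity
  have hfinal : ∀ (j : Fin (p+1) → Fin m) (x : Fin m → ℝ),
      c j x = ∑ k : Fin m, x k * b (Fin.cons k j) x := by
    intro j x
    have hLsum : ∀ (L : (Fin m → ℝ) →L[ℝ] ℝ) (v : Fin m → ℝ),
        L v = ∑ k : Fin m, v k * L (Pi.single k 1) := by
      intro L v
      have hv : v = ∑ k : Fin m, v k • (Pi.single k (1:ℝ) : Fin m → ℝ) := by
        funext i
        rw [Finset.sum_apply]
        simp only [Pi.smul_apply, Pi.single_apply, smul_eq_mul, mul_ite, mul_one, mul_zero]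
        rw [Finset.sum_ite_eq Finset.univ i]
        simp
      conv_lhs => rw [hv]
      rw [map_sum]
      simp [smul_eq_mul]
    have hfd : ∀ t : ℝ, ∑ k : Fin m, (t • x) k * pd (c j) k (t • x)
        = t * (fderiv ℝ (c j) (t • x) x) := by
      intro t
      rw [hpd]
      simp only
      rw [← hLsum (fderiv ℝ (c j) (t • x)) (t • x)]
      rw [map_smul]
      simp [smul_eq_mul]
    have hψg : ∀ t : ℝ, ∑ k : Fin m, x k * (t^(p+1) * g (Fin.cons k j) (t • x))
        = N * ((p+1) * t^p * c j (t • x) + t^(p+1) * (fderiv ℝ (c j) (t • x) x)) := by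
      intro t
      have h1 : ∀ k : Fin m, x k * (t^(p+1) * g (Fin.cons k j) (t • x))
          = t^p * ((t • x) k * g (Fin.cons k j) (t • x)) := by
        intro k
        simp only [Pi.smul_apply, smul_eq_mul]
        rw [pow_succ]
        ring
      rw [Finset.sum_congr rfl (fun k _ => h1 k), ← Finset.mul_sum]
      rw [hkey j (t • x), hfd t]
      rw [pow_succ]
      ring
    have hφ : ∀ t : ℝ, HasDerivAt (fun s : ℝ => s^(p+1) * c j (s • x))
        ((p+1) * t^p * c j (t • x) + t^(p+1) * (fderiv ℝ (c j) (t • x) x)) t := by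
      intro t
      have h1 : HasDerivAt (fun s : ℝ => s^(p+1)) ((((p+1):ℕ):ℝ) * t^p) t := by
        simpa using hasDerivAt_pow (p+1) t
      have ha : HasDerivAt (fun s : ℝ => s • x) x t := by
        simpa using (hasDerivAt_id t).smul_const x
      have h2 : HasDerivAt (fun s : ℝ => c j (s • x)) (fderiv ℝ (c j) (t • x) x) t := by
        have h3 := ((hdiff j) (t • x)).hasFDerivAt.comp_hasDerivAt t ha
        exact h3
      have h4 := h1.fun_mul h2
      refine h4.congr_deriv ?_
      push_cast
      ring
    have hfdcont : Continuous (fun y : Fin m → ℝ => fderiv ℝ (c j) y x) := by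
      have h1 : Continuous (fderiv ℝ (c j)) := (hA j).continuous_fderiv (by simp)
      exact (ContinuousLinearMap.apply ℝ ℝ x).continuous.comp h1
    have hsm : Continuous (fun t : ℝ => t • x) := continuous_id.smul continuous_const
    have hψcont : Continuous (fun t : ℝ => (p+1) * t^p * c j (t • x)
        + t^(p+1) * (fderiv ℝ (c j) (t • x) x)) :=
      ((continuous_const.mul (continuous_pow p)).mul ((hcontc j).comp hsm)).add
        ((continuous_pow (p+1)).mul (hfdcont.comp hsm))
    have hFTC : ∫ t in (0:ℝ)..1, ((p+1) * t^p * c j (t • x)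
        + t^(p+1) * (fderiv ℝ (c j) (t • x) x)) = c j x := by
      rw [intervalIntegral.integral_eq_sub_of_hasDerivAt (fun t _ => hφ t)
        (hψcont.intervalIntegrable 0 1)]
      norm_num
    have hintk : ∀ k : Fin m, IntervalIntegrable
        (fun t : ℝ => x k * (t^(p+1) * g (Fin.cons k j) (t • x)))
        MeasureTheory.volume 0 1 := fun k =>
      (continuous_const.mul ((continuous_pow (p+1)).mul
        ((hgcont _).comp hsm))).intervalIntegrable 0 1
    calc c j x = ∫ t in (0:ℝ)..1, ((p+1) * t^p * c j (t • x)
          + t^(p+1) * (fderiv ℝ (c j) (t • x) x)) := hFTC.symm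
      _ = N⁻¹ * ∫ t in (0:ℝ)..1, N * ((p+1) * t^p * c j (t • x)
          + t^(p+1) * (fderiv ℝ (c j) (t • x) x)) := by
          rw [intervalIntegral.integral_const_mul, ← mul_assoc,
            inv_mul_cancel₀ (ne_of_gt hNpos), one_mul]
      _ = N⁻¹ * ∫ t in (0:ℝ)..1, ∑ k : Fin m, x k * (t^(p+1) * g (Fin.cons k j) (t • x)) := by
          congr 1
          refine intervalIntegral.integral_congr (fun t _ => ?_)
          rw [hψg t]
      _ = N⁻¹ * ∑ k : Fin m, ∫ t in (0:ℝ)..1, x k * (t^(p+1) * g (Fin.cons k j) (t • x)) := by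
          rw [intervalIntegral.integral_finset_sum (fun k _ => hintk k)]
      _ = ∑ k : Fin m, x k * b (Fin.cons k j) x := by
          rw [Finset.mul_sum]
          refine Finset.sum_congr rfl (fun k _ => ?_)
          simp only [hbdef]
          rw [intervalIntegral.integral_const_mul]
          ring
  exact ⟨b, hbsmooth, hbalt, hbzero, hfinal⟩
end

section
/- Existence of a diagonal bump function: let M be a smooth m-dimensional manifold without boundary and let U ⊆ M be an open set contained in the source of some chart of M. Then there exists a smooth function F : M × U → ℝ (where U carries its induced smooth manifold structure and M × U the product structure) such that F(s, s) = 1 for every s ∈ U, and the closed support of F is contained in { (s, t) ∈ M × U : s ∈ U } (in particular F(s, t) = 0, and F vanishes on a neighborhood of (s, t), whenever s ∉ U). -/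
open TopologicalSpace
open scoped Manifold

open Set Filter Topology Function

/-! In the chart `e`, let `ψ ≥ 0` be a smooth function whose support is exactly `V = e '' U`, and
put `G (x, y) = smoothTransition (2 ψ x / ψ y - 1) * χ (x - y)` with `χ` a bump function supported
in the unit ball. Then `G (y, y) = 1`, and for all `y` near a point `y₀ ∈ V` the function `G (·, y)`
is supported in the compact set `{ψ ≥ ψ y₀ / 4} ∩ closedBall y₀ 2 ⊆ V`. Its image under `e.symm` is
compact, hence closed in the Hausdorff space `M`; this keeps the closed support of
`F (s, t) = G (e s, e t)`, extended by zero off the chart, inside `{(s, t) | s ∈ U}`. -/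

noncomputable section Euclidean

variable {E : Type*} [NormedAddCommGroup E] [NormedSpace ℝ E] [HasContDiffBump E]

variable (E) in
def unitBump : ContDiffBump (0 : E) := ⟨1 / 2, 1, by norm_num, by norm_num⟩

def diagonalBump (ψ : E → ℝ) (p : E × E) : ℝ :=
  Real.smoothTransition (2 * (ψ p.1 / ψ p.2) - 1) * unitBump E (p.1 - p.2)

theorem diagonalBump_self {ψ : E → ℝ} {y : E} (hy : ψ y ≠ 0) : diagonalBump ψ (y, y) = 1 := by
  have hχ : unitBump E 0 = 1 :=
    (unitBump E).one_of_mem_closedBall (Metric.mem_closedBall_self (unitBump E).rIn_pos.le)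
  simp only [diagonalBump, div_self hy, sub_self, hχ]
  norm_num [Real.smoothTransition.one]

theorem contDiffOn_diagonalBump {ψ : E → ℝ} {n : ℕ∞} (hψ : ContDiff ℝ n ψ) :
    ContDiffOn ℝ n (diagonalBump ψ) (univ ×ˢ support ψ) := by
  have h₁ : ContDiffOn ℝ n (fun p : E × E => ψ p.1) (univ ×ˢ support ψ) :=
    (hψ.comp contDiff_fst).contDiffOn
  have h₂ : ContDiffOn ℝ n (fun p : E × E => ψ p.2) (univ ×ˢ support ψ) :=
    (hψ.comp contDiff_snd).contDiffOn
  have hquot := h₁.div h₂ fun p hp => hp.2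
  exact (Real.smoothTransition.contDiff.comp_contDiffOn
    ((contDiffOn_const.mul hquot).sub contDiffOn_const)).mul
    ((unitBump E).contDiff.comp_contDiffOn (contDiff_fst.sub contDiff_snd).contDiffOn)

theorem diagonalBump_ne_zero {ψ : E → ℝ} {x y : E} (hy : 0 < ψ y)
    (h : diagonalBump ψ (x, y) ≠ 0) : ψ y / 2 < ψ x ∧ dist x y < 1 := by
  obtain ⟨htrans, hχ⟩ := mul_ne_zero_iff.1 h
  constructor
  · have : 0 < 2 * (ψ x / ψ y) - 1 := by
      by_contra! hle
      exact htrans (Real.smoothTransition.zero_of_nonpos hle)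
    have : 1 / 2 < ψ x / ψ y := by linarith
    rw [lt_div_iff₀ hy] at this
    linarith
  · have hmem : x - y ∈ support (unitBump E) := hχ
    rw [ContDiffBump.support_eq, mem_ball_zero_iff, ← dist_eq_norm] at hmem
    exact hmem

theorem exists_isCompact_forall_diagonalBump_ne_zero [ProperSpace E] {ψ : E → ℝ}
    (hψ : Continuous ψ) {y : E} (hy : 0 < ψ y) : ∃ W ∈ 𝓝 y, ∃ K, IsCompact K ∧ K ⊆ support ψ ∧
      ∀ x, ∀ y' ∈ W, diagonalBump ψ (x, y') ≠ 0 → x ∈ K := by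
  refine ⟨{y' | ψ y / 2 < ψ y'} ∩ Metric.ball y 1, ?_, {x | ψ y / 4 ≤ ψ x} ∩ Metric.closedBall y 2,
    ?_, ?_, ?_⟩
  · exact inter_mem ((isOpen_lt continuous_const hψ).mem_nhds (by simpa using hy))
      (Metric.ball_mem_nhds y one_pos)
  · exact (isCompact_closedBall y 2).of_isClosed_subset
      ((isClosed_le continuous_const hψ).inter Metric.isClosed_closedBall) inter_subset_right
  · intro x hx
    exact (lt_of_lt_of_le (by linarith) hx.1).ne'
  · rintro x y' ⟨hy'ψ : ψ y / 2 < ψ y', hy'y⟩ hx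
    obtain ⟨hxψ, hxy'⟩ := diagonalBump_ne_zero (by linarith) hx
    refine ⟨show ψ y / 4 ≤ ψ x by linarith, ?_⟩
    rw [Metric.mem_closedBall]
    linarith [dist_triangle x y' y, Metric.mem_ball.1 hy'y]

end Euclidean

theorem IsOpen.exists_contDiffOn_diagonalBump {E : Type*} [NormedAddCommGroup E] [NormedSpace ℝ E]
    [FiniteDimensional ℝ E] {V : Set E} (hV : IsOpen V) (n : ℕ∞) :
    ∃ G : E × E → ℝ, ContDiffOn ℝ n G (univ ×ˢ V) ∧ (∀ y ∈ V, G (y, y) = 1) ∧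
      ∀ y ∈ V, ∃ W ∈ 𝓝 y, ∃ K, IsCompact K ∧ K ⊆ V ∧ ∀ x, ∀ y' ∈ W, G (x, y') ≠ 0 → x ∈ K := by
  obtain ⟨ψ, rfl, hψ, hψ01⟩ := hV.exists_contDiff_support_eq (n := n)
  have hψpos : ∀ y ∈ support ψ, 0 < ψ y := fun y hy => (hψ01 ⟨y, rfl⟩).1.lt_of_ne' hy
  exact ⟨diagonalBump ψ, contDiffOn_diagonalBump hψ, fun y hy => diagonalBump_self hy,
    fun y hy => exists_isCompact_forall_diagonalBump_ne_zero hψ.continuous (hψpos y hy)⟩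

section Chart

variable {M : Type*} [TopologicalSpace M] {N : Type*} [TopologicalSpace N]

section Topology

variable {E : Type*} [TopologicalSpace E]

theorem tsupport_indicator_chart_comp_subset [T2Space M] {e : OpenPartialHomeomorph M E}
    {U : Set M} (hU : U ⊆ e.source) {τ : N → E} (hτ : Continuous τ) (hτU : ∀ z, τ z ∈ e '' U)
    {G : E × E → ℝ} (hG : ∀ y ∈ e '' U, ∃ W ∈ 𝓝 y, ∃ K, IsCompact K ∧ K ⊆ e '' U ∧
      ∀ x, ∀ y' ∈ W, G (x, y') ≠ 0 → x ∈ K) :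
    tsupport ((e.source ×ˢ univ).indicator fun p : M × N => G (e p.1, τ p.2)) ⊆
      {p | p.1 ∈ U} := by
  rintro ⟨s, z⟩ hp
  by_contra hs
  obtain ⟨W, hW, K, hK, hKU, hGK⟩ := hG _ (hτU z)
  have hKU' : e.symm '' K ⊆ U := by
    rintro _ ⟨k, hk, rfl⟩
    obtain ⟨u, hu, rfl⟩ := hKU hk
    rwa [e.left_inv (hU hu)]
  have hKc : IsClosed (e.symm '' K) := (hK.image_of_continuousOn (e.continuousOn_symm.mono
    (hKU.trans ((image_mono hU).trans e.image_source_eq_target.subset)))).isClosed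
  have hO : (e.symm '' K)ᶜ ×ˢ (τ ⁻¹' W) ∈ 𝓝 (s, z) :=
    prod_mem_nhds (hKc.isOpen_compl.mem_nhds fun h => hs (hKU' h))
      (hτ.continuousAt.preimage_mem_nhds hW)
  obtain ⟨q, ⟨hq₁, hq₂⟩, hq⟩ := mem_closure_iff_nhds.1 hp _ hO
  obtain ⟨⟨hqe, -⟩, hqG⟩ := indicator_apply_ne_zero.1 hq
  exact hq₁ ⟨e q.1, hGK _ _ hq₂ hqG, e.left_inv hqe⟩

end Topology

variable {E : Type*} [NormedAddCommGroup E] [NormedSpace ℝ E] [ChartedSpace E M]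
  {F : Type*} [NormedAddCommGroup F] [NormedSpace ℝ F] {H : Type*} [TopologicalSpace H]
  {J : ModelWithCorners ℝ F H} [ChartedSpace H N] {n : ℕ∞}

theorem contMDiff_indicator_chart_comp [IsManifold 𝓘(ℝ, E) n M] {e : OpenPartialHomeomorph M E}
    (he : e ∈ IsManifold.maximalAtlas 𝓘(ℝ, E) n M) {τ : N → E} (hτ : ContMDiff J 𝓘(ℝ, E) n τ)
    {V : Set E} (hτV : ∀ z, τ z ∈ V) {G : E × E → ℝ} (hG : ContDiffOn ℝ n G (univ ×ˢ V))
    (hsupp : tsupport ((e.source ×ˢ univ).indicator fun p : M × N => G (e p.1, τ p.2)) ⊆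
      e.source ×ˢ univ) :
    ContMDiff (𝓘(ℝ, E).prod J) 𝓘(ℝ, ℝ) n
      ((e.source ×ˢ univ).indicator fun p : M × N => G (e p.1, τ p.2)) := by
  have hchart : ContMDiffOn (𝓘(ℝ, E).prod J) 𝓘(ℝ, E × E) n (fun p : M × N => (e p.1, τ p.2))
      (e.source ×ˢ univ) := by
    rw [contMDiffOn_prod_module_iff]
    exact ⟨(contMDiffOn_of_mem_maximalAtlas he).comp
      (contMDiff_fst.contMDiffOn (s := e.source ×ˢ univ)) fun p hp => hp.1,
      (hτ.comp contMDiff_snd).contMDiffOn⟩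
  have hGe := hG.contMDiffOn.comp hchart fun p _ => ⟨mem_univ _, hτV p.2⟩
  refine contMDiff_of_tsupport fun p hp => ?_
  exact (hGe.congr fun q hq => indicator_of_mem hq _).contMDiffAt
    ((e.open_source.prod isOpen_univ).mem_nhds (hsupp hp))

end Chart

/-- Existence of a diagonal bump function: if `U` is an open subset of a smooth
`m`-manifold `M` contained in the source of a chart, then there is a smooth
function `F : M × U → ℝ` with `F(s,s) = 1` for `s ∈ U` whose closed support is
contained in `{(s,t) : s ∈ U}`. -/
theorem exists_diagonal_bump (m : ℕ) (M : Type*) [TopologicalSpace M] [T2Space M]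
    [ChartedSpace (EuclideanSpace ℝ (Fin m)) M]
    [IsManifold (𝓘(ℝ, EuclideanSpace ℝ (Fin m))) (⊤ : ℕ∞) M]
    (U : Opens M)
    (hU : ∃ e ∈ atlas (EuclideanSpace ℝ (Fin m)) M, (U : Set M) ⊆ e.source) :
    ∃ F : M × U → ℝ,
      ContMDiff ((𝓘(ℝ, EuclideanSpace ℝ (Fin m))).prod
          (𝓘(ℝ, EuclideanSpace ℝ (Fin m)))) 𝓘(ℝ, ℝ) (⊤ : ℕ∞) F ∧
      (∀ t : U, F ((t : M), t) = 1) ∧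
      tsupport F ⊆ {p : M × U | (p.1 : M) ∈ (U : Set M)} := by
  obtain ⟨e, he, hUe⟩ := hU
  obtain ⟨G, hGsmooth, hGdiag, hGsupp⟩ :=
    (e.isOpen_image_of_subset_source U.isOpen hUe).exists_contDiffOn_diagonalBump ⊤
  have he' := IsManifold.subset_maximalAtlas (I := 𝓘(ℝ, EuclideanSpace ℝ (Fin m)))
    (n := (⊤ : ℕ∞)) he
  have hτ : ContMDiff 𝓘(ℝ, EuclideanSpace ℝ (Fin m)) 𝓘(ℝ, EuclideanSpace ℝ (Fin m)) (⊤ : ℕ∞)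
      fun t : U => e t :=
    (contMDiffOn_of_mem_maximalAtlas he').comp_contMDiff contMDiff_subtype_val fun t => hUe t.2
  have hτU : ∀ t : U, e t ∈ e '' U := fun t => mem_image_of_mem e t.2
  have hsupp := tsupport_indicator_chart_comp_subset hUe hτ.continuous hτU hGsupp
  refine ⟨_, contMDiff_indicator_chart_comp he' hτ hτU hGsmooth
    (hsupp.trans fun p hp => ⟨hUe hp, mem_univ _⟩), fun t => ?_, hsupp⟩
  rw [indicator_of_mem (mk_mem_prod (hUe t.2) (mem_univ t))]
  exact hGdiag _ (hτU t)
end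

section
/- Algebraic core of the projectivity of C^∞(U) over C^∞(M) (Theorem 2): let M be a smooth m-dimensional manifold without boundary and let U ⊆ M be an open set contained in the source of some chart of M. Let π : C^∞(M × U, ℝ) → C^∞(U, ℝ) be the diagonal restriction map, π(f)(t) = f(t, t) for t ∈ U. Then there exists an ℝ-linear map ρ : C^∞(U, ℝ) → C^∞(M × U, ℝ) such that π ∘ ρ = id, and ρ is a morphism of C^∞(M, ℝ)-modules: for every f ∈ C^∞(M, ℝ) and g ∈ C^∞(U, ℝ) one has ρ( (f ∘ ι) · g ) = (f ∘ pr₁) · ρ(g), where ι : U → M is the inclusion and pr₁ : M × U → M is the first projection. -/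
/-!
Work in the chart `e ⊇ U`. A partition of unity gives a smooth radius `δ > 0` on `U` with
`closedBall (e t) (δ t) ⊆ e '' U`, and `b (x, t) = smoothTransition (1 - ‖e x - e t‖² / (δ t / 2)²)`
is a bump that equals `1` on the diagonal and vanishes unless `e x` lies within `δ t / 2` of `e t`.
Then `ρ g (x, t) = b (x, t) * g x`, extended by zero off `U × U`, is smooth: its support stays in
preimages of compact balls, which are closed in the Hausdorff space `M`. Since `ρ g` is `g` at the
first coordinate multiplied by a fixed function, `ρ` is linear over `C^∞(M)`.
-/

open TopologicalSpace
open scoped Manifold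

noncomputable section

/-- The real vector space `C^∞(N, ℝ)` of smooth real-valued functions on a
manifold `N` (modelled by `I`), as a linear subspace of all functions `N → ℝ`. -/
def SmoothRealFns {E H : Type*} [NormedAddCommGroup E] [NormedSpace ℝ E]
    [TopologicalSpace H] (I : ModelWithCorners ℝ E H)
    (N : Type*) [TopologicalSpace N] [ChartedSpace H N] : Submodule ℝ (N → ℝ) where
  carrier := {f | ContMDiff I 𝓘(ℝ, ℝ) (⊤ : ℕ∞) f}
  add_mem' {a b} (hf : ContMDiff I 𝓘(ℝ, ℝ) (⊤ : ℕ∞) a) (hg : ContMDiff I 𝓘(ℝ, ℝ) (⊤ : ℕ∞) b) := hf.add hg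
  zero_mem' := show ContMDiff I 𝓘(ℝ, ℝ) (⊤ : ℕ∞) (fun _ => (0 : ℝ)) from contMDiff_const
  smul_mem' c f (hf : ContMDiff I 𝓘(ℝ, ℝ) (⊤ : ℕ∞) f) := by
    show ContMDiff I 𝓘(ℝ, ℝ) (⊤ : ℕ∞) (c • f)
    exact contMDiff_const.mul hf

theorem mem_smoothRealFns_iff {E H : Type*} [NormedAddCommGroup E] [NormedSpace ℝ E]
    [TopologicalSpace H] {I : ModelWithCorners ℝ E H}
    {N : Type*} [TopologicalSpace N] [ChartedSpace H N] {f : N → ℝ} :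
    f ∈ SmoothRealFns I N ↔ ContMDiff I 𝓘(ℝ, ℝ) (⊤ : ℕ∞) f := Iff.rfl

open Set Metric Topology Function
open scoped ContDiff

theorem exists_contMDiff_pos_closedBall_subset {E H : Type*} [NormedAddCommGroup E]
    [NormedSpace ℝ E] [FiniteDimensional ℝ E] [TopologicalSpace H] (I : ModelWithCorners ℝ E H)
    {N : Type*} [TopologicalSpace N] [ChartedSpace H N] [IsManifold I ∞ N] [SigmaCompactSpace N]
    [T2Space N] {X : Type*} [PseudoMetricSpace X] {φ : N → X} (hφ : Continuous φ) {V : Set X}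
    (hV : IsOpen V) (hφV : ∀ t, φ t ∈ V) (n : ℕ∞) :
    ∃ δ : N → ℝ, ContMDiff I 𝓘(ℝ) n δ ∧ ∀ t, 0 < δ t ∧ closedBall (φ t) (δ t) ⊆ V := by
  have hconvex : ∀ t, Convex ℝ {r : ℝ | 0 < r ∧ closedBall (φ t) r ⊆ V} := fun t ↦
    convex_iff_ordConnected.mpr ⟨fun a ha b hb s hs ↦
      ⟨ha.1.trans_le hs.1, (closedBall_subset_closedBall hs.2).trans hb.2⟩⟩
  have hlocal : ∀ t₀, ∃ r : ℝ, ∀ᶠ t in 𝓝 t₀, 0 < r ∧ closedBall (φ t) r ⊆ V := by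
    intro t₀
    obtain ⟨ε, hε, hball⟩ := isOpen_iff.mp hV (φ t₀) (hφV t₀)
    have hnear : ∀ᶠ t in 𝓝 t₀, dist (φ t) (φ t₀) < ε / 2 :=
      hφ.continuousAt.eventually (ball_mem_nhds _ (half_pos hε))
    refine ⟨ε / 2, hnear.mono fun t ht ↦ ⟨half_pos hε, fun z hz ↦ hball ?_⟩⟩
    calc dist z (φ t₀) ≤ dist z (φ t) + dist (φ t) (φ t₀) := dist_triangle _ _ _
      _ < ε := by linarith [mem_closedBall.mp hz]
  obtain ⟨δ, hδ⟩ := exists_contMDiffMap_forall_mem_convex_of_local_const I (n := n) hconvex hlocal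
  exact ⟨δ, δ.contMDiff, hδ⟩

theorem closure_setOf_dist_lt_subset {M X N : Type*} [TopologicalSpace M] [T2Space M]
    [PseudoMetricSpace X] [ProperSpace X] [TopologicalSpace N] {e : OpenPartialHomeomorph M X}
    {U : Set M} (hUe : U ⊆ e.source) {c : N → X} {r : N → ℝ} (hc : Continuous c)
    (hr : Continuous r) (hr0 : ∀ t, 0 < r t) (hball : ∀ t, closedBall (c t) (2 * r t) ⊆ e '' U) :
    closure {p : M × N | p.1 ∈ U ∧ dist (e p.1) (c p.2) < r p.2} ⊆ U ×ˢ univ := by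
  rintro ⟨x, t⟩ hp
  by_contra hxU
  set K := e.symm '' closedBall (c t) (2 * r t)
  have hKU : K ⊆ U := by
    rintro _ ⟨y, hy, rfl⟩
    obtain ⟨x, hx, rfl⟩ := hball t hy
    rwa [e.left_inv (hUe hx)]
  have hK : IsCompact K := (isCompact_closedBall _ _).image_of_continuousOn
    (e.continuousOn_symm.mono fun y hy ↦ by
      obtain ⟨x, hx, rfl⟩ := hball t hy
      exact e.map_source (hUe hx))
  -- `K` is closed because `M` is Hausdorff, and for `s` near `t` the ball of radius `r s`
  -- around `c s` lies in the ball of radius `2 * r t` around `c t`, whose preimage is `K`.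
  have hW : Kᶜ ×ˢ {s | dist (c s) (c t) + r s < 2 * r t} ∈ 𝓝 (x, t) :=
    prod_mem_nhds (hK.isClosed.isOpen_compl.mem_nhds fun hx ↦ hxU ⟨hKU hx, trivial⟩)
      ((isOpen_lt ((hc.dist continuous_const).add hr) continuous_const).mem_nhds
        (show dist (c t) (c t) + r t < 2 * r t by linarith [dist_self (c t), hr0 t]))
  obtain ⟨⟨x', s⟩, ⟨hx'K, hs⟩, hx'U, hx's⟩ := mem_closure_iff_nhds.mp hp _ hW
  refine hx'K ⟨e x', mem_closedBall.mpr ?_, e.left_inv (hUe hx'U)⟩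
  calc dist (e x') (c t) ≤ dist (e x') (c s) + dist (c s) (c t) := dist_triangle _ _ _
    _ ≤ 2 * r t := by linarith [show dist (c s) (c t) + r s < 2 * r t from hs]

theorem contMDiffAt_extend_val_zero {E H : Type*} [NormedAddCommGroup E] [NormedSpace ℝ E]
    [TopologicalSpace H] {I : ModelWithCorners ℝ E H} {M : Type*} [TopologicalSpace M]
    [ChartedSpace H M] {U : Opens M} {g : U → ℝ} {n : WithTop ℕ∞} (hg : ContMDiff I 𝓘(ℝ) n g)
    {x : M} (hx : x ∈ U) : ContMDiffAt I 𝓘(ℝ) n (extend Subtype.val g 0) x := by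
  refine contMDiffAt_subtype_iff (x := ⟨x, hx⟩).mp ?_
  simpa only [Subtype.val_injective.extend_apply] using hg ⟨x, hx⟩

theorem extend_val_eq_zero_of_notMem {M : Type*} [TopologicalSpace M] {U : Opens M}
    (g : U → ℝ) {x : M} (hx : x ∉ U) : extend Subtype.val g 0 x = 0 :=
  extend_apply' _ _ _ fun ⟨t, ht⟩ ↦ hx (ht ▸ t.2)

section
variable {E : Type*} [NormedAddCommGroup E] {M : Type*} [TopologicalSpace M] {N : Type*}

def chartBump (e : OpenPartialHomeomorph M E) (c : N → E) (r : N → ℝ) (p : M × N) : ℝ :=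
  Real.smoothTransition (1 - ‖e p.1 - c p.2‖ ^ 2 / r p.2 ^ 2)

variable {e : OpenPartialHomeomorph M E} {c : N → E} {r : N → ℝ}

theorem chartBump_eq_one {p : M × N} (h : e p.1 = c p.2) : chartBump e c r p = 1 := by
  simp [chartBump, h]

theorem dist_lt_of_chartBump_ne_zero {p : M × N} (hr : 0 < r p.2) (h : chartBump e c r p ≠ 0) :
    dist (e p.1) (c p.2) < r p.2 := by
  contrapose! h
  refine Real.smoothTransition.zero_of_nonpos (sub_nonpos.mpr ?_)
  rw [one_le_div (by positivity), ← dist_eq_norm]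
  exact pow_le_pow_left₀ hr.le h 2

theorem contMDiffAt_chartBump [InnerProductSpace ℝ E] [ChartedSpace E M] {EN HN : Type*}
    [NormedAddCommGroup EN] [NormedSpace ℝ EN] [TopologicalSpace HN] {J : ModelWithCorners ℝ EN HN} [TopologicalSpace N] [ChartedSpace HN N]
    {n : ℕ∞} [IsManifold 𝓘(ℝ, E) n M] (he : e ∈ atlas E M) {p : M × N}
    (hp : p.1 ∈ e.source) (hc : ContMDiffAt J 𝓘(ℝ, E) n c p.2)
    (hr : ContMDiffAt J 𝓘(ℝ) n r p.2) (hr0 : r p.2 ≠ 0) :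
    ContMDiffAt (𝓘(ℝ, E).prod J) 𝓘(ℝ) n (chartBump e c r) p := by
  have he' : ContMDiffAt 𝓘(ℝ, E) 𝓘(ℝ, E) n e p.1 :=
    contMDiffAt_of_mem_maximalAtlas (IsManifold.subset_maximalAtlas he) hp
  have hdist : ContMDiffAt (𝓘(ℝ, E).prod J) 𝓘(ℝ) n (fun q : M × N ↦ ‖e q.1 - c q.2‖ ^ 2) p :=
    (contDiff_norm_sq ℝ).contMDiff.contMDiffAt.comp p
      ((he'.comp p contMDiffAt_fst).sub (hc.comp p contMDiffAt_snd))
  exact Real.smoothTransition.contDiff.contMDiff.contMDiffAt.comp p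
    (contMDiffAt_const.sub (hdist.div₀ ((hr.comp p contMDiffAt_snd).pow 2) (pow_ne_zero 2 hr0)))

def bumpExtension (U : Opens M) (e : OpenPartialHomeomorph M E) (c : N → E) (r : N → ℝ) : (U → ℝ) →ₗ[ℝ] (M × N → ℝ) :=
  LinearMap.mulLeft ℝ (chartBump e c r) ∘ₗ LinearMap.funLeft ℝ ℝ Prod.fst ∘ₗ
    ExtendByZero.linearMap ℝ Subtype.val

variable (U : Opens M)

theorem bumpExtension_apply (g : U → ℝ) (p : M × N) :
    bumpExtension U e c r g p = chartBump e c r p * extend Subtype.val g 0 p.1 := rfl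

theorem bumpExtension_apply_of_eq (g : U → ℝ) {x : U} {t : N} (h : e x = c t) :
    bumpExtension U e c r g (x, t) = g x := by
  rw [bumpExtension_apply, chartBump_eq_one h, Subtype.val_injective.extend_apply, one_mul]

theorem bumpExtension_comp_val_mul (f : M → ℝ) (g : U → ℝ) :
    bumpExtension U e c r (fun t ↦ f t * g t) = fun p ↦ f p.1 * bumpExtension U e c r g p := by
  funext ⟨x, t⟩
  simp only [bumpExtension_apply]
  by_cases hx : x ∈ U
  · lift x to U using hx
    simp only [Subtype.val_injective.extend_apply]
    ring
  · simp only [extend_val_eq_zero_of_notMem _ hx, mul_zero]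

theorem support_bumpExtension_subset (hr0 : ∀ t, 0 < r t) (g : U → ℝ) :
    support (bumpExtension U e c r g) ⊆ {p | p.1 ∈ U ∧ dist (e p.1) (c p.2) < r p.2} := by
  intro p hp
  rw [mem_support, bumpExtension_apply] at hp
  exact ⟨by_contra fun hx ↦ right_ne_zero_of_mul hp (extend_val_eq_zero_of_notMem g hx),
    dist_lt_of_chartBump_ne_zero (hr0 p.2) (left_ne_zero_of_mul hp)⟩

theorem contMDiff_bumpExtension [InnerProductSpace ℝ E] [FiniteDimensional ℝ E] [ChartedSpace E M]
    [T2Space M] {n : ℕ∞} [IsManifold 𝓘(ℝ, E) n M] (he : e ∈ atlas E M)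
    (hUe : (U : Set M) ⊆ e.source) {EN HN : Type*} [NormedAddCommGroup EN] [NormedSpace ℝ EN]
    [TopologicalSpace HN] {J : ModelWithCorners ℝ EN HN} [TopologicalSpace N] [ChartedSpace HN N]
    (hc : ContMDiff J 𝓘(ℝ, E) n c) (hr : ContMDiff J 𝓘(ℝ) n r) (hr0 : ∀ t, 0 < r t)
    (hball : ∀ t, closedBall (c t) (2 * r t) ⊆ e '' U) {g : U → ℝ}
    (hg : ContMDiff 𝓘(ℝ, E) 𝓘(ℝ) n g) :
    ContMDiff (𝓘(ℝ, E).prod J) 𝓘(ℝ) n (bumpExtension U e c r g) := by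
  refine contMDiff_of_tsupport fun p hp ↦ ?_
  have hpU : p.1 ∈ U := (closure_setOf_dist_lt_subset hUe hc.continuous hr.continuous hr0 hball
    (closure_mono (support_bumpExtension_subset U hr0 g) hp)).1
  exact (contMDiffAt_chartBump he (hUe hpU) hc.contMDiffAt hr.contMDiffAt (hr0 _).ne').mul
    ((contMDiffAt_extend_val_zero hg hpU).comp p contMDiffAt_fst)

end

/-- Algebraic core of the projectivity of `C^∞(U)` over `C^∞(M)`: for an open set
`U` contained in a chart of a smooth `m`-manifold `M`, the diagonal restriction
`π : C^∞(M × U) → C^∞(U)`, `π(f)(t) = f(t,t)`, has a right inverse `ρ` which is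
`ℝ`-linear and is a morphism of `C^∞(M)`-modules:
`ρ((f∘ι)·g) = (f∘pr₁)·ρ(g)` for all `f ∈ C^∞(M)`, `g ∈ C^∞(U)`. -/
theorem exists_module_section_of_diagonal_restriction (m : ℕ) (M : Type*)
    [TopologicalSpace M] [T2Space M]
    [ChartedSpace (EuclideanSpace ℝ (Fin m)) M]
    [IsManifold (𝓘(ℝ, EuclideanSpace ℝ (Fin m))) (⊤ : ℕ∞) M]
    (U : Opens M)
    (hU : ∃ e ∈ atlas (EuclideanSpace ℝ (Fin m)) M, (U : Set M) ⊆ e.source) :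
    ∃ ρ : SmoothRealFns (𝓘(ℝ, EuclideanSpace ℝ (Fin m))) U →ₗ[ℝ]
        SmoothRealFns ((𝓘(ℝ, EuclideanSpace ℝ (Fin m))).prod
          (𝓘(ℝ, EuclideanSpace ℝ (Fin m)))) (M × U),
      (∀ (g : SmoothRealFns (𝓘(ℝ, EuclideanSpace ℝ (Fin m))) U) (t : U),
        (ρ g : M × U → ℝ) ((t : M), t) = (g : U → ℝ) t) ∧
      (∀ (f : M → ℝ) (hf : ContMDiff (𝓘(ℝ, EuclideanSpace ℝ (Fin m))) 𝓘(ℝ, ℝ) (⊤ : ℕ∞) f)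
          (g : SmoothRealFns (𝓘(ℝ, EuclideanSpace ℝ (Fin m))) U),
        ρ ⟨fun t : U => f (t : M) * (g : U → ℝ) t,
            mem_smoothRealFns_iff.mpr
              ((hf.comp contMDiff_subtype_val).mul (mem_smoothRealFns_iff.mp g.2))⟩
          = ⟨fun p : M × U => f p.1 * (ρ g : M × U → ℝ) p,
            mem_smoothRealFns_iff.mpr
              ((hf.comp contMDiff_fst).mul (mem_smoothRealFns_iff.mp (ρ g).2))⟩) := by
  obtain ⟨e, he, hUe⟩ := hU
  have hc : ContMDiff 𝓘(ℝ, EuclideanSpace ℝ (Fin m)) 𝓘(ℝ, EuclideanSpace ℝ (Fin m)) (⊤ : ℕ∞)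
      (fun t : U ↦ e t) :=
    (contMDiffOn_of_mem_maximalAtlas (IsManifold.subset_maximalAtlas he)).comp_contMDiff
      contMDiff_subtype_val fun t ↦ hUe t.2
  have : LocallyCompactSpace M := ChartedSpace.locallyCompactSpace (EuclideanSpace ℝ (Fin m)) M
  have : LocallyCompactSpace U := U.2.locallyCompactSpace
  have : SecondCountableTopology U := (IsEmbedding.subtypeVal.comp
    (e.homeomorphOfImageSubsetSource hUe rfl).isEmbedding).secondCountableTopology
  obtain ⟨δ, hδ, hδV⟩ := exists_contMDiff_pos_closedBall_subset 𝓘(ℝ, EuclideanSpace ℝ (Fin m))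
    hc.continuous (e.isOpen_image_of_subset_source U.2 hUe) (fun t ↦ mem_image_of_mem e t.2) ⊤
  have hball : ∀ t : U, closedBall (e t) (2 * (δ t / 2)) ⊆ e '' U := fun t ↦ by
    rw [mul_div_cancel₀ (δ t) two_ne_zero]
    exact (hδV t).2
  refine ⟨(bumpExtension U e (fun t : U ↦ e t) (fun t ↦ δ t / 2)).restrict fun g hg ↦
      contMDiff_bumpExtension U he hUe hc (hδ.div_const 2) (fun t ↦ half_pos (hδV t).1) hball hg,
    fun g t ↦ bumpExtension_apply_of_eq U _ rfl,
    fun f hf g ↦ Subtype.ext (bumpExtension_comp_val_mul U f g)⟩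

end
end

section
/- Vanishing of the smooth Čech cohomology of an open cover in positive degrees: let M be a smooth m-dimensional manifold without boundary, Hausdorff and second countable, let (U_i)_{i ∈ ℕ} be a countable family of open sets covering M, and let n ≥ 1. Suppose c assigns to each (n+1)-tuple j : Fin (n+1) → ℕ a function c(j) : M → ℝ that is smooth on the intersection V(j) = ⋂_{l} U_{j(l)}, is alternating (c(j ∘ σ)(x) = sign(σ) · c(j)(x) for every permutation σ of Fin (n+1) and every x), and satisfies the cocycle condition: for every (n+2)-tuple j : Fin (n+2) → ℕ and every x ∈ ⋂_{l} U_{j(l)}, Σ_{k=0}^{n+1} (−1)^k · c(j ∘ Fin.succAbove k)(x) = 0. Then there exists a family b assigning to each n-tuple j : Fin n → ℕ a function b(j) : M → ℝ smooth on ⋂_{l} U_{j(l)} and alternating, such that for every (n+1)-tuple j : Fin (n+1) → ℕ and every x ∈ ⋂_{l} U_{j(l)}, Σ_{k=0}^{n} (−1)^k · b(j ∘ Fin.succAbove k)(x) = c(j)(x). -/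
open scoped Manifold BigOperators

/-!
Choose a smooth partition of unity `ρ` subordinate to the cover and cone off every cochain with
apex `i`, weighted by `ρ i`: `b j = ∑ᵢ ρᵢ · c (i, j)`. On `U i` the cocycle condition at the
simplex `(i, j)` says that the coboundary of `c (i, ·)` is `c`, so `δ b = ∑ᵢ ρᵢ · c = c`.
Alternation of `b` is inherited from that of `c`, and smoothness holds because `ρ i` vanishes
near every point outside `U i`.
-/

open Function Set

namespace Cech

variable {α R : Type*} [CommRing R] {n : ℕ}

def coboundary (b : (Fin n → α) → R) (j : Fin (n + 1) → α) : R :=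
  ∑ k : Fin (n + 1), (-1 : R) ^ (k : ℕ) * b (j ∘ k.succAbove)

def IsAlternating (c : (Fin n → α) → R) : Prop :=
  ∀ (j : Fin n → α) (σ : Equiv.Perm (Fin n)), c (j ∘ σ) = ((Equiv.Perm.sign σ : ℤ) : R) * c j

noncomputable def coneHomotopy (w : α → R) (c : (Fin (n + 1) → α) → R) (j : Fin n → α) : R :=
  ∑ᶠ i, w i * c (Fin.cons i j)

theorem coboundary_cons (c : (Fin (n + 1) → α) → R) (i : α) (j : Fin (n + 1) → α) :
    coboundary c (Fin.cons i j) = c j - coboundary (fun j' => c (Fin.cons i j')) j := by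
  simp only [coboundary, Fin.sum_univ_succ (n := n + 1), Fin.succAbove_zero, Fin.cons_comp_succ,
    Fin.cons_comp_succ_succAbove, Fin.val_zero, Fin.val_succ, pow_succ]
  simp only [pow_zero, one_mul, mul_neg_one, neg_mul, Finset.sum_neg_distrib, sub_eq_add_neg]
  rfl

theorem coboundary_finsum_mul (w : α → R) (hw : (support w).Finite)
    (c : α → (Fin n → α) → R) (j : Fin (n + 1) → α) :
    coboundary (fun j' => ∑ᶠ i, w i * c i j') j = ∑ᶠ i, w i * coboundary (c i) j := by
  have hfin : ∀ f : α → R, ∑ᶠ i, w i * f i = ∑ i ∈ hw.toFinset, w i * f i := fun f =>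
    finsum_eq_sum_of_support_subset _ (by simpa using support_mul_subset_left w f)
  simp only [coboundary, hfin]
  simp only [Finset.mul_sum]
  rw [Finset.sum_comm]
  simp only [mul_left_comm]

theorem coboundary_coneHomotopy (w : α → R) (hw : (support w).Finite) (hw₁ : ∑ᶠ i, w i = 1)
    (c : (Fin (n + 1) → α) → R) (j : Fin (n + 1) → α)
    (hc : ∀ i, w i ≠ 0 → coboundary c (Fin.cons i j) = 0) :
    coboundary (coneHomotopy w c) j = c j :=
  calc coboundary (coneHomotopy w c) j
      = ∑ᶠ i, w i * coboundary (fun j' => c (Fin.cons i j')) j := coboundary_finsum_mul w hw _ j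
    _ = ∑ᶠ i, w i * c j := finsum_congr fun i => by
        rcases eq_or_ne (w i) 0 with hi | hi
        · rw [hi, zero_mul, zero_mul]
        · rw [← sub_eq_zero.mp ((coboundary_cons c i j).symm.trans (hc i hi))]
    _ = c j := by rw [← finsum_mul' _ _ hw, hw₁, one_mul]

theorem IsAlternating.coneHomotopy {c : (Fin (n + 1) → α) → R} (hc : IsAlternating c)
    (w : α → R) (hw : (support w).Finite) : IsAlternating (coneHomotopy w c) := by
  intro j σ
  -- `decomposeFin.symm (0, σ)` fixes `0` and acts as `σ` on the successors, with the sign of `σ`.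
  have hcons : ∀ i, (Fin.cons i (j ∘ σ) : Fin (n + 1) → α) =
      Fin.cons i j ∘ Equiv.Perm.decomposeFin.symm (0, σ) := fun i => by
    ext k
    refine Fin.cases ?_ (fun k => ?_) k <;> simp
  have hsupp : (support fun i => w i * c (Fin.cons i j)).Finite :=
    hw.subset (support_mul_subset_left _ _)
  simp only [Cech.coneHomotopy, hcons, hc _ (Equiv.Perm.decomposeFin.symm _),
    Equiv.Perm.decomposeFin.symm_sign, if_pos, one_mul, mul_finsum' _ _ hsupp, mul_left_comm]

end Cech

theorem Set.iInter_fin_cons {X α : Type*} {n : ℕ} (U : α → Set X) (i : α) (j : Fin n → α) :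
    ⋂ l, U ((Fin.cons i j : Fin (n + 1) → α) l) = U i ∩ ⋂ l, U (j l) := by
  ext x
  simp [Fin.forall_fin_succ]

section Smooth

variable {ι E F H M : Type*} [NormedAddCommGroup E] [NormedSpace ℝ E]
  [NormedAddCommGroup F] [NormedSpace ℝ F] [TopologicalSpace H] {I : ModelWithCorners ℝ E H}
  [TopologicalSpace M] [ChartedSpace H M] {s : Set M} {ρ : SmoothPartitionOfUnity ι I M s}

theorem SmoothPartitionOfUnity.IsSubordinate.contMDiffOn_finsum_smul {U : ι → Set M}
    (hρ : ρ.IsSubordinate U) (hU : ∀ i, IsOpen (U i)) {t : Set M} (ht : IsOpen t) {n : ℕ∞}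
    {g : ι → M → F} (hg : ∀ i, ContMDiffOn I 𝓘(ℝ, F) n (g i) (t ∩ U i)) :
    ContMDiffOn I 𝓘(ℝ, F) n (fun x => ∑ᶠ i, ρ i x • g i x) t := fun _ hx =>
  (ρ.contMDiffAt_finsum fun i hi =>
    (hg i).contMDiffAt ((ht.inter (hU i)).mem_nhds ⟨hx, hρ i hi⟩)).contMDiffWithinAt

end Smooth

theorem cech_cohomology_smooth_vanishes_general (m n : ℕ) (M : Type*)
    [TopologicalSpace M] [T2Space M] [SecondCountableTopology M]
    [ChartedSpace (EuclideanSpace ℝ (Fin m)) M]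
    [IsManifold (𝓘(ℝ, EuclideanSpace ℝ (Fin m))) (⊤ : ℕ∞) M]
    (U : ℕ → Set M) (hUopen : ∀ i, IsOpen (U i)) (hUcover : (⋃ i, U i) = Set.univ)
    (c : (Fin (n + 1) → ℕ) → M → ℝ)
    (hsmooth : ∀ j : Fin (n + 1) → ℕ,
      ContMDiffOn (𝓘(ℝ, EuclideanSpace ℝ (Fin m))) 𝓘(ℝ, ℝ) (⊤ : ℕ∞) (c j) (⋂ l, U (j l)))
    (halt : ∀ (j : Fin (n + 1) → ℕ) (σ : Equiv.Perm (Fin (n + 1))) (x : M),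
      c (j ∘ σ) x = ((Equiv.Perm.sign σ : ℤ) : ℝ) * c j x)
    (hcocycle : ∀ j : Fin (n + 2) → ℕ, ∀ x ∈ ⋂ l, U (j l),
      ∑ k : Fin (n + 2), (-1 : ℝ) ^ (k : ℕ) * c (j ∘ k.succAbove) x = 0) :
    ∃ b : (Fin n → ℕ) → M → ℝ,
      (∀ j : Fin n → ℕ,
        ContMDiffOn (𝓘(ℝ, EuclideanSpace ℝ (Fin m))) 𝓘(ℝ, ℝ) (⊤ : ℕ∞) (b j) (⋂ l, U (j l))) ∧
      (∀ (j : Fin n → ℕ) (σ : Equiv.Perm (Fin n)) (x : M),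
        b (j ∘ σ) x = ((Equiv.Perm.sign σ : ℤ) : ℝ) * b j x) ∧
      (∀ j : Fin (n + 1) → ℕ, ∀ x ∈ ⋂ l, U (j l),
        ∑ k : Fin (n + 1), (-1 : ℝ) ^ (k : ℕ) * b (j ∘ k.succAbove) x = c j x) := by
  have := ChartedSpace.locallyCompactSpace (EuclideanSpace ℝ (Fin m)) M
  obtain ⟨ρ, hρ⟩ := SmoothPartitionOfUnity.exists_isSubordinate 𝓘(ℝ, EuclideanSpace ℝ (Fin m))
    isClosed_univ U hUopen hUcover.ge
  refine ⟨fun j x => Cech.coneHomotopy (ρ · x) (c · x) j, fun j => ?_, fun j σ x => ?_,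
    fun j x hx => ?_⟩
  · refine hρ.contMDiffOn_finsum_smul hUopen (isOpen_iInter_of_finite fun l => hUopen (j l))
      fun i => (hsmooth (Fin.cons i j)).mono ?_
    rw [Set.iInter_fin_cons, Set.inter_comm]
  · exact Cech.IsAlternating.coneHomotopy (fun j σ => halt j σ x) _
      (ρ.locallyFinite.point_finite x) j σ
  · refine Cech.coboundary_coneHomotopy _ (ρ.locallyFinite.point_finite x)
      (ρ.sum_eq_one (Set.mem_univ x)) _ j fun i hi => hcocycle _ x ?_
    rw [Set.iInter_fin_cons]
    exact ⟨hρ i (subset_tsupport _ hi), hx⟩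

/-- Vanishing of the smooth Čech cohomology of a countable open cover of a smooth
manifold in positive degrees: every alternating Čech `n`-cochain `c` (with `n ≥ 1`)
of smooth functions satisfying the cocycle condition is the Čech coboundary of an
alternating `(n-1)`-cochain `b` of smooth functions. -/
theorem cech_cohomology_smooth_vanishes (m n : ℕ) (hn : 1 ≤ n) (M : Type*)
    [TopologicalSpace M] [T2Space M] [SecondCountableTopology M]
    [ChartedSpace (EuclideanSpace ℝ (Fin m)) M]
    [IsManifold (𝓘(ℝ, EuclideanSpace ℝ (Fin m))) (⊤ : ℕ∞) M]
    (U : ℕ → Set M) (hUopen : ∀ i, IsOpen (U i)) (hUcover : (⋃ i, U i) = Set.univ)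
    (c : (Fin (n + 1) → ℕ) → M → ℝ)
    (hsmooth : ∀ j : Fin (n + 1) → ℕ,
      ContMDiffOn (𝓘(ℝ, EuclideanSpace ℝ (Fin m))) 𝓘(ℝ, ℝ) (⊤ : ℕ∞) (c j) (⋂ l, U (j l)))
    (halt : ∀ (j : Fin (n + 1) → ℕ) (σ : Equiv.Perm (Fin (n + 1))) (x : M),
      c (j ∘ σ) x = ((Equiv.Perm.sign σ : ℤ) : ℝ) * c j x)
    (hcocycle : ∀ j : Fin (n + 2) → ℕ, ∀ x ∈ ⋂ l, U (j l),
      ∑ k : Fin (n + 2), (-1 : ℝ) ^ (k : ℕ) * c (j ∘ k.succAbove) x = 0) :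
    ∃ b : (Fin n → ℕ) → M → ℝ,
      (∀ j : Fin n → ℕ,
        ContMDiffOn (𝓘(ℝ, EuclideanSpace ℝ (Fin m))) 𝓘(ℝ, ℝ) (⊤ : ℕ∞) (b j) (⋂ l, U (j l))) ∧
      (∀ (j : Fin n → ℕ) (σ : Equiv.Perm (Fin n)) (x : M),
        b (j ∘ σ) x = ((Equiv.Perm.sign σ : ℤ) : ℝ) * b j x) ∧
      (∀ j : Fin (n + 1) → ℕ, ∀ x ∈ ⋂ l, U (j l),
        ∑ k : Fin (n + 1), (-1 : ℝ) ^ (k : ℕ) * b (j ∘ k.succAbove) x = c j x) :=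
  cech_cohomology_smooth_vanishes_general m n M U hUopen hUcover c hsmooth halt hcocycle
end

section
/- Hadamard lemma at a point of a manifold via a global chart: let M be a smooth m-dimensional manifold without boundary, s₀ ∈ M, and let U₀ ⊆ M be an open neighborhood of s₀ for which there is a diffeomorphism ω : U₀ → ℝ^m (a smooth bijection with smooth inverse, with U₀ carrying its induced manifold structure) satisfying ω(s₀) = 0. Then for every smooth function f : U₀ → ℝ with f(s₀) = 0 there exist smooth functions f₁, …, f_m : U₀ → ℝ such that f(t) = Σ_{i=1}^{m} ω(t)_i · f_i(t) for all t ∈ U₀, where ω(t)_i denotes the i-th coordinate of ω(t). -/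
/-!
Along the segment from `0` to `x`, the fundamental theorem of calculus gives
`F x = F 0 + (∫ t in 0..1, DF (t • x)) x`, so expanding `x` in a basis `(eᵢ)` writes `F - F 0` as
`∑ᵢ xᵢ • gᵢ` with `gᵢ x = (∫ t in 0..1, DF (t • x)) eᵢ`. The `gᵢ` are smooth by differentiation
under the integral sign over the compact interval `[0, 1]`. On `U₀`, apply this to `f ∘ ω⁻¹`.
-/

open TopologicalSpace Set Filter Topology MeasureTheory intervalIntegral Function
open scoped Manifold

universe u

theorem IsCompact.exists_eventually_forall_norm_le {X Y F : Type*} [TopologicalSpace X]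
    [TopologicalSpace Y] [SeminormedAddGroup F] {K : Set Y} (hK : IsCompact K)
    {g : X → Y → F} (hg : Continuous (uncurry g)) (x₀ : X) :
    ∃ C, ∀ᶠ x in 𝓝 x₀, ∀ y ∈ K, ‖g x y‖ ≤ C := by
  obtain ⟨C, hC⟩ := hK.exists_bound_of_continuousOn
    (hg.comp (Continuous.prodMk_right x₀)).continuousOn
  refine ⟨C + 1, hK.eventually_forall_of_forall_eventually fun y hy => ?_⟩
  have hlt : ‖uncurry g (x₀, y)‖ < C + 1 := (hC y hy).trans_lt (lt_add_one C)
  exact (hg.norm.continuousAt.eventually (gt_mem_nhds hlt)).mono fun z hz => hz.le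

theorem hasFDerivAt_intervalIntegral_of_contDiff {H E : Type*} [NormedAddCommGroup H]
    [NormedSpace ℝ H] [NormedAddCommGroup E] [NormedSpace ℝ E] {F : H → ℝ → E}
    (hF : ContDiff ℝ 1 (uncurry F)) (a b : ℝ) (x₀ : H) :
    HasFDerivAt (fun x => ∫ t in a..b, F x t)
      (∫ t in a..b, fderiv ℝ (uncurry F) (x₀, t) ∘L .inl ℝ H ℝ) x₀ := by
  set F' : H → ℝ → H →L[ℝ] E := fun x t => fderiv ℝ (uncurry F) (x, t) ∘L .inl ℝ H ℝ
  have hF' : Continuous (uncurry F') :=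
    (hF.continuous_fderiv one_ne_zero).clm_comp continuous_const
  have hFx : ∀ x t, HasFDerivAt (fun x => F x t) (F' x t) x := fun x t =>
    show HasFDerivAt (uncurry F ∘ fun x => (x, t)) _ x from
    (hF.differentiable one_ne_zero (x, t)).hasFDerivAt.comp x
      (hasFDerivAt_prodMk_left (𝕜 := ℝ) x t)
  obtain ⟨C, hC⟩ := isCompact_uIcc.exists_eventually_forall_norm_le hF' x₀
  exact intervalIntegral.hasFDerivAt_integral_of_dominated_of_fderiv_le (bound := fun _ => C) hC
    (Eventually.of_forall fun x =>
      (hF.continuous.comp (Continuous.prodMk_right x)).aestronglyMeasurable)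
    ((hF.continuous.comp (Continuous.prodMk_right x₀)).intervalIntegrable a b)
    ((hF'.comp (Continuous.prodMk_right x₀)).aestronglyMeasurable)
    (ae_of_all _ fun t ht x hx => hx t (uIoc_subset_uIcc ht)) intervalIntegrable_const
    (ae_of_all _ fun t _ x _ => hFx x t)

/- The induction passes to the codomain `H →L[ℝ] E`, hence a single universe for `H` and `E`. -/
theorem contDiff_intervalIntegral_of_contDiff {H E : Type u} [NormedAddCommGroup H]
    [NormedSpace ℝ H] [NormedAddCommGroup E] [NormedSpace ℝ E] {n : ℕ∞} {F : H → ℝ → E}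
    (hF : ContDiff ℝ n (uncurry F)) (a b : ℝ) :
    ContDiff ℝ n fun x => ∫ t in a..b, F x t := by
  suffices h : ∀ (k : ℕ) (E : Type u) [NormedAddCommGroup E] [NormedSpace ℝ E] (F : H → ℝ → E),
      ContDiff ℝ k (uncurry F) → ContDiff ℝ k fun x => ∫ t in a..b, F x t from
    contDiff_iff_forall_nat_le.2 fun k hk => h k E F (hF.of_le (mod_cast hk))
  intro k
  induction k with
  | zero =>
    intro E _ _ F hF
    exact contDiff_zero.2 (continuous_parametric_intervalIntegral_of_continuous'
      (contDiff_zero.1 hF) a b)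
  | succ k ih =>
    intro E _ _ F hF
    have hderiv := hasFDerivAt_intervalIntegral_of_contDiff (hF.of_le (mod_cast k.succ_pos)) a b
    rw [Nat.cast_succ, contDiff_succ_iff_fderiv]
    refine ⟨fun x => (hderiv x).differentiableAt, by simp, ?_⟩
    rw [funext fun x => (hderiv x).fderiv]
    exact ih _ (fun x t => fderiv ℝ (uncurry F) (x, t) ∘L .inl ℝ H ℝ)
      ((hF.fderiv_right le_rfl).clm_comp contDiff_const)

theorem eq_add_integral_fderiv_apply {H E : Type*} [NormedAddCommGroup H] [NormedSpace ℝ H]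
    [NormedAddCommGroup E] [NormedSpace ℝ E] [CompleteSpace E] {F : H → E}
    (hF : ContDiff ℝ 1 F) (x : H) :
    F x = F 0 + (∫ t in (0 : ℝ)..1, fderiv ℝ F (t • x)) x := by
  have hF' : Continuous fun t : ℝ => fderiv ℝ F (t • x) :=
    (hF.continuous_fderiv one_ne_zero).comp (continuous_id.smul continuous_const)
  have hderiv : ∀ t ∈ uIcc (0 : ℝ) 1,
      HasDerivAt (fun t : ℝ => F (t • x)) (fderiv ℝ F (t • x) x) t := fun t _ => by
    simpa [Function.comp_def] using
      (hF.differentiable one_ne_zero (t • x)).hasFDerivAt.comp_hasDerivAt t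
        ((hasDerivAt_id t).smul_const x)
  rw [ContinuousLinearMap.intervalIntegral_apply (hF'.intervalIntegrable 0 1),
    integral_eq_sub_of_hasDerivAt hderiv
      (((ContinuousLinearMap.apply ℝ E x).continuous.comp hF').intervalIntegrable 0 1)]
  simp

theorem Module.Basis.exists_contDiff_eq_add_sum_repr_smul {ι : Type*} [Fintype ι] {H E : Type u}
    [NormedAddCommGroup H] [NormedSpace ℝ H] [NormedAddCommGroup E] [NormedSpace ℝ E]
    [CompleteSpace E] (b : Module.Basis ι ℝ H) {n : ℕ∞} {F : H → E}
    (hF : ContDiff ℝ (n + 1) F) :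
    ∃ g : ι → H → E, (∀ i, ContDiff ℝ n (g i)) ∧ ∀ x, F x = F 0 + ∑ i, b.repr x i • g i x := by
  set G : H → H →L[ℝ] E := fun x => ∫ t in (0 : ℝ)..1, fderiv ℝ F (t • x)
  have hG : ContDiff ℝ n G := contDiff_intervalIntegral_of_contDiff
    ((hF.fderiv_right le_rfl).comp (contDiff_snd.smul contDiff_fst)) 0 1
  refine ⟨fun i x => G x (b i), fun i => hG.clm_apply contDiff_const, fun x => ?_⟩
  rw [eq_add_integral_fderiv_apply (hF.of_le le_add_self) x, ← congrArg (G x) (b.sum_repr x),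
    map_sum]
  simp only [map_smul]

theorem hadamard_at_point_of_global_chart_general (m : ℕ) (M : Type*)
    [TopologicalSpace M]
    [ChartedSpace (EuclideanSpace ℝ (Fin m)) M]
    (s₀ : M) (U₀ : Opens M) (hs₀ : s₀ ∈ U₀)
    (ω : U₀ ≃ EuclideanSpace ℝ (Fin m))
    (hω : ContMDiff (𝓘(ℝ, EuclideanSpace ℝ (Fin m)))
      (𝓘(ℝ, EuclideanSpace ℝ (Fin m))) (⊤ : ℕ∞) ω)
    (hωsymm : ContMDiff (𝓘(ℝ, EuclideanSpace ℝ (Fin m)))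
      (𝓘(ℝ, EuclideanSpace ℝ (Fin m))) (⊤ : ℕ∞) ω.symm)
    (hω₀ : ω ⟨s₀, hs₀⟩ = 0)
    (f : U₀ → ℝ)
    (hf : ContMDiff (𝓘(ℝ, EuclideanSpace ℝ (Fin m))) 𝓘(ℝ, ℝ) (⊤ : ℕ∞) f)
    (hf₀ : f ⟨s₀, hs₀⟩ = 0) :
    ∃ g : Fin m → (U₀ → ℝ),
      (∀ i, ContMDiff (𝓘(ℝ, EuclideanSpace ℝ (Fin m))) 𝓘(ℝ, ℝ) (⊤ : ℕ∞) (g i)) ∧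
      ∀ t : U₀, f t = ∑ i : Fin m, (ω t) i * g i t := by
  have hF : ContDiff ℝ ((⊤ : ℕ∞) + 1) (f ∘ ω.symm) := by
    simpa using (hf.comp hωsymm).contDiff
  obtain ⟨g, hg, hfg⟩ :=
    (EuclideanSpace.basisFun (Fin m) ℝ).toBasis.exists_contDiff_eq_add_sum_repr_smul hF
  refine ⟨fun i => g i ∘ ω, fun i => (hg i).contMDiff.comp hω, fun t => ?_⟩
  simpa [← hω₀, hf₀] using hfg (ω t)

/-- Hadamard's lemma at a point of a manifold, via a global chart: if `U₀ ⊆ M` is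
an open neighborhood of `s₀` diffeomorphic to `ℝ^m` via `ω` with `ω(s₀) = 0`, then
every smooth function `f : U₀ → ℝ` with `f(s₀) = 0` can be written as
`f = ∑ᵢ ωⁱ · fᵢ` with the `fᵢ` smooth on `U₀`. -/
theorem hadamard_at_point_of_global_chart (m : ℕ) (M : Type*)
    [TopologicalSpace M]
    [ChartedSpace (EuclideanSpace ℝ (Fin m)) M]
    [IsManifold (𝓘(ℝ, EuclideanSpace ℝ (Fin m))) (⊤ : ℕ∞) M]
    (s₀ : M) (U₀ : Opens M) (hs₀ : s₀ ∈ U₀)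
    (ω : U₀ ≃ EuclideanSpace ℝ (Fin m))
    (hω : ContMDiff (𝓘(ℝ, EuclideanSpace ℝ (Fin m)))
      (𝓘(ℝ, EuclideanSpace ℝ (Fin m))) (⊤ : ℕ∞) ω)
    (hωsymm : ContMDiff (𝓘(ℝ, EuclideanSpace ℝ (Fin m)))
      (𝓘(ℝ, EuclideanSpace ℝ (Fin m))) (⊤ : ℕ∞) ω.symm)
    (hω₀ : ω ⟨s₀, hs₀⟩ = 0)
    (f : U₀ → ℝ)
    (hf : ContMDiff (𝓘(ℝ, EuclideanSpace ℝ (Fin m))) 𝓘(ℝ, ℝ) (⊤ : ℕ∞) f)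
    (hf₀ : f ⟨s₀, hs₀⟩ = 0) :
    ∃ g : Fin m → (U₀ → ℝ),
      (∀ i, ContMDiff (𝓘(ℝ, EuclideanSpace ℝ (Fin m))) 𝓘(ℝ, ℝ) (⊤ : ℕ∞) (g i)) ∧
      ∀ t : U₀, f t = ∑ i : Fin m, (ω t) i * g i t :=
  hadamard_at_point_of_global_chart_general m M s₀ U₀ hs₀ ω hω hωsymm hω₀ f hf hf₀
end
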